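/- arXiv:nlin/0504029 — 8 statements merged into one kernel-verified Lean document; each statement's English description precedes it below -/
import Mathlib

section
/- The function u(x,t) = 2·(∂²/∂x²) log(1 + exp(√c·(x − δ − c·t))) is a solution of the Korteweg–de Vries equation ∂u/∂t = −∂³u/∂x³ − 6u·∂u/∂x for all (x,t) ∈ ℝ². -/
/-!
The function is a traveling wave `U (x - c t)`: since `(log (1 + eˣ))'' = σ' = σ (1 - σ)` for the
logistic function `σ`, its profile is `U ξ = 2 c σ (1 - σ) (√c (ξ - δ))`, and KdV reduces to the
ODE `c U' = U''' + 6 U U'`. Because `σ' = σ (1 - σ)`, the derivative of `p (σ x)` for a polynomial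
`p` is `(D p) (σ x)` with the derivation `D p = p' · X (1 - X)`. Using `√c ² = c`, the ODE becomes
the polynomial identity `D³P + 12 P · DP = DP` for `P = X (1 - X)`.
-/

open Real Polynomial

namespace Real

lemma hasDerivAt_log_one_add_exp (x : ℝ) :
    HasDerivAt (fun x => log (1 + exp x)) (sigmoid x) x := by
  convert ((hasDerivAt_exp x).const_add 1).log (by positivity) using 1
  rw [sigmoid_def, exp_neg]
  field_simp
  ring

lemma deriv_log_one_add_exp : deriv (fun x => log (1 + exp x)) = sigmoid :=
  funext fun x => (hasDerivAt_log_one_add_exp x).deriv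

lemma contDiff_log_one_add_exp {n : WithTop ℕ∞} : ContDiff ℝ n (fun x => log (1 + exp x)) :=
  (contDiff_const.add contDiff_exp).log fun x => by positivity

end Real

lemma iteratedDeriv_comp_mul_sub {𝕜 : Type*} [NontriviallyNormedField 𝕜] {n : ℕ} {f : 𝕜 → 𝕜}
    (hf : ContDiff 𝕜 n f) (k a : 𝕜) :
    iteratedDeriv n (fun y => f (k * (y - a))) =
      fun y => k ^ n * iteratedDeriv n f (k * (y - a)) := by
  rw [iteratedDeriv_comp_sub_const n (fun z => f (k * z)), iteratedDeriv_comp_const_mul hf]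

def SolvesKdV (u : ℝ → ℝ → ℝ) : Prop :=
  ∀ x t, deriv (fun s => u x s) t =
    -(iteratedDeriv 3 (fun y => u y t) x) - 6 * u x t * deriv (fun y => u y t) x

lemma solvesKdV_travelingWave {U : ℝ → ℝ} (hU : Differentiable ℝ U) {c : ℝ}
    (hode : ∀ ξ, c * deriv U ξ = iteratedDeriv 3 U ξ + 6 * U ξ * deriv U ξ) :
    SolvesKdV fun x t => U (x - c * t) := by
  intro x t
  have ht : HasDerivAt (fun s => U (x - c * s)) (deriv U (x - c * t) * -c) t := by
    have hlin := ((hasDerivAt_id t).const_mul c).const_sub x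
    exact (hU _).hasDerivAt.comp t (by simpa using hlin)
  rw [ht.deriv, iteratedDeriv_comp_sub_const, deriv_comp_sub_const]
  linear_combination -hode (x - c * t)

noncomputable def Polynomial.sigmoidDerivative (p : ℝ[X]) : ℝ[X] := derivative p * (X * (1 - X))

lemma hasDerivAt_eval_sigmoid (p : ℝ[X]) (x : ℝ) :
    HasDerivAt (fun x => p.eval (sigmoid x)) (p.sigmoidDerivative.eval (sigmoid x)) x := by
  have h := (p.hasDerivAt (sigmoid x)).comp x (hasDerivAt_sigmoid x)
  simp only [sigmoidDerivative, eval_mul, eval_sub, eval_X, eval_one]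
  exact h

lemma contDiff_eval_sigmoid (p : ℝ[X]) {n : WithTop ℕ∞} :
    ContDiff ℝ n fun x => p.eval (sigmoid x) :=
  (contDiff_aeval p n).comp (contDiff_sigmoid.of_le le_top)

lemma iteratedDeriv_eval_sigmoid (n : ℕ) (p : ℝ[X]) :
    iteratedDeriv n (fun x => p.eval (sigmoid x)) =
      fun x => (sigmoidDerivative^[n] p).eval (sigmoid x) := by
  induction n generalizing p with
  | zero => rfl
  | succ n ih =>
    rw [iteratedDeriv_succ', Function.iterate_succ_apply, ← ih]
    congr 1
    exact funext fun x => (hasDerivAt_eval_sigmoid p x).deriv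

lemma sigmoidDerivative_soliton_identity :
    sigmoidDerivative^[3] (X * (1 - X)) + 12 * (X * (1 - X)) * sigmoidDerivative (X * (1 - X)) =
      sigmoidDerivative (X * (1 - X) : ℝ[X]) := by
  simp only [Function.iterate_succ_apply', Function.iterate_zero_apply, sigmoidDerivative,
    derivative_mul, derivative_sub, derivative_add, derivative_X, derivative_one, derivative_zero]
  ring

lemma iteratedDeriv_two_log_one_add_exp_comp (k a x : ℝ) :
    iteratedDeriv 2 (fun y => log (1 + exp (k * (y - a)))) x =
      k ^ 2 * (sigmoid (k * (x - a)) * (1 - sigmoid (k * (x - a)))) := by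
  rw [iteratedDeriv_comp_mul_sub contDiff_log_one_add_exp, iteratedDeriv_succ', iteratedDeriv_one,
    deriv_log_one_add_exp, deriv_sigmoid]

/-- The classical KdV soliton `(c / 2) sech² (√c (ξ - δ) / 2)`. -/
noncomputable def solitonProfile (c δ ξ : ℝ) : ℝ :=
  2 * c * (sigmoid (√c * (ξ - δ)) * (1 - sigmoid (√c * (ξ - δ))))

lemma differentiable_solitonProfile (c δ : ℝ) : Differentiable ℝ (solitonProfile c δ) := by
  unfold solitonProfile
  fun_prop

lemma iteratedDeriv_solitonProfile (c δ : ℝ) (n : ℕ) :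
    iteratedDeriv n (solitonProfile c δ) = fun ξ =>
      2 * c * √c ^ n * (sigmoidDerivative^[n] (X * (1 - X))).eval (sigmoid (√c * (ξ - δ))) := by
  have h : solitonProfile c δ =
      fun ξ => 2 * c * (X * (1 - X) : ℝ[X]).eval (sigmoid (√c * (ξ - δ))) := by
    funext ξ
    simp [solitonProfile]
  funext ξ
  rw [h, iteratedDeriv_const_mul_field, iteratedDeriv_comp_mul_sub (contDiff_eval_sigmoid _),
    iteratedDeriv_eval_sigmoid]
  ring

lemma solitonProfile_ode {c : ℝ} (hc : 0 ≤ c) (δ ξ : ℝ) :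
    c * deriv (solitonProfile c δ) ξ =
      iteratedDeriv 3 (solitonProfile c δ) ξ +
        6 * solitonProfile c δ ξ * deriv (solitonProfile c δ) ξ := by
  set s := sigmoid (√c * (ξ - δ))
  have hP := congrArg (eval s) sigmoidDerivative_soliton_identity
  simp only [eval_add, eval_mul, eval_sub, eval_X, eval_one, eval_ofNat] at hP
  have hsq : √c ^ 2 = c := sq_sqrt hc
  rw [← iteratedDeriv_one, iteratedDeriv_solitonProfile, iteratedDeriv_solitonProfile,
    Function.iterate_one, solitonProfile]
  linear_combination (-2 * c ^ 2 * √c) * hP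
    - 2 * c * √c * (sigmoidDerivative^[3] (X * (1 - X))).eval s * hsq

/-- The 1-soliton `u(x,t) = 2 (∂²/∂x²) log(1 + exp(√c (x − δ − c t)))` solves the KdV
equation `∂u/∂t = −∂³u/∂x³ − 6 u ∂u/∂x` on all of `ℝ²`. -/
theorem one_soliton_solves_KdV (c δ : ℝ) (hc : 0 < c) (u : ℝ → ℝ → ℝ)
    (hu : u = fun x t : ℝ =>
      2 * iteratedDeriv 2 (fun y : ℝ => Real.log (1 + Real.exp (Real.sqrt c * (y - δ - c * t)))) x) :
    ∀ x t : ℝ,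
      deriv (fun s : ℝ => u x s) t =
        -(iteratedDeriv 3 (fun y : ℝ => u y t) x)
          - 6 * u x t * deriv (fun y : ℝ => u y t) x := by
  have hwave : u = fun x t => solitonProfile c δ (x - c * t) := by
    funext x t
    simp only [hu, sub_sub, add_comm δ, iteratedDeriv_two_log_one_add_exp_comp, sq_sqrt hc.le,
      solitonProfile]
    ring
  subst hwave
  exact solvesKdV_travelingWave (differentiable_solitonProfile c δ) (solitonProfile_ode hc.le δ)
end

section
/- The function u(x,t) = 2·(∂²/∂x²) log(1 + exp(√c·(x − δ + c²·t))) is a solution of the integrable fifth-order KdV equation ∂u/∂t = ∂⁵u/∂x⁵ + 10u·∂³u/∂x³ + 20(∂u/∂x)·(∂²u/∂x²) + 30u²·∂u/∂x for all (x,t) ∈ ℝ². -/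
/-!
With `σ` the logistic function and `z = √c (x − δ + c² t)`, the soliton is `u = 2c σ(z)(1 − σ(z))`.
Since `σ' = σ(1 − σ)`, differentiating `p(σ(z))` for a polynomial `p` gives `(X(1 − X) p')(σ(z))`,
so every derivative of `u` is a polynomial in `σ(z)`; and since `u` depends on `x + c² t` only,
`∂ₜ = c² ∂ₓ`. After scaling out the powers of `√c`, the equation becomes a single identity
in `ℝ[X]` between iterates of the derivation `p ↦ X(1 − X) p'`, checked by expansion.
-/

open Polynomial Real

noncomputable def sigmoidDeriv (p : ℝ[X]) : ℝ[X] := X * (1 - X) * derivative p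

theorem HasDerivAt.polynomial_eval_sigmoid {g : ℝ → ℝ} {g' x : ℝ} (p : ℝ[X])
    (hg : HasDerivAt g g' x) :
    HasDerivAt (fun y => p.eval (sigmoid (g y))) ((sigmoidDeriv p).eval (sigmoid (g x)) * g') x := by
  refine ((p.hasDerivAt _).comp x ((hasDerivAt_sigmoid _).comp x hg)).congr_deriv ?_
  simp only [sigmoidDeriv, Function.comp_apply, eval_mul, eval_sub, eval_X, eval_one]
  ring

theorem hasDerivAt_mul_add_const (a b x : ℝ) : HasDerivAt (fun y => a * (y + b)) a x := by
  simpa using ((hasDerivAt_id x).add_const b).const_mul a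

theorem iteratedDeriv_polynomial_eval_sigmoid_affine (p : ℝ[X]) (n : ℕ) (a b : ℝ) :
    iteratedDeriv n (fun y => p.eval (sigmoid (a * (y + b))))
      = fun y => a ^ n * (sigmoidDeriv^[n] p).eval (sigmoid (a * (y + b))) := by
  induction n generalizing p with
  | zero => simp
  | succ n ih =>
    have hderiv : deriv (fun y => p.eval (sigmoid (a * (y + b))))
        = fun y => a * (sigmoidDeriv p).eval (sigmoid (a * (y + b))) := by
      funext y
      rw [((hasDerivAt_mul_add_const a b y).polynomial_eval_sigmoid p).deriv, mul_comm]
    funext y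
    rw [iteratedDeriv_succ', hderiv, iteratedDeriv_const_mul_field, ih, Function.iterate_succ_apply]
    ring

theorem HasDerivAt.log_one_add_exp {g : ℝ → ℝ} {g' x : ℝ} (hg : HasDerivAt g g' x) :
    HasDerivAt (fun y => Real.log (1 + Real.exp (g y))) (sigmoid (g x) * g') x := by
  refine (hg.exp.const_add 1).log (by positivity) |>.congr_deriv ?_
  rw [sigmoid_def, Real.exp_neg]
  field_simp
  ring

theorem iteratedDeriv_succ_log_one_add_exp_affine (n : ℕ) (a b : ℝ) :
    iteratedDeriv (n + 1) (fun y => log (1 + exp (a * (y + b))))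
      = fun y => a ^ (n + 1) * (sigmoidDeriv^[n] X).eval (sigmoid (a * (y + b))) := by
  have hderiv : deriv (fun y => log (1 + exp (a * (y + b))))
      = fun y => a * X.eval (sigmoid (a * (y + b))) := by
    funext y
    rw [(hasDerivAt_mul_add_const a b y).log_one_add_exp.deriv, eval_X, mul_comm]
  funext y
  rw [iteratedDeriv_succ', hderiv, iteratedDeriv_const_mul_field,
    iteratedDeriv_polynomial_eval_sigmoid_affine]
  ring

theorem sigmoidDeriv_iterate_fifthOrderKdV :
    sigmoidDeriv^[2] X = sigmoidDeriv^[6] X + 20 * sigmoidDeriv X * sigmoidDeriv^[4] X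
      + 40 * sigmoidDeriv^[2] X * sigmoidDeriv^[3] X
      + 120 * sigmoidDeriv X ^ 2 * sigmoidDeriv^[2] X := by
  simp only [Function.iterate_succ_apply', Function.iterate_zero_apply, sigmoidDeriv, derivative_X,
    derivative_one, derivative_mul, derivative_sub, derivative_add, derivative_neg, mul_one, one_mul,
    mul_zero, zero_mul, add_zero, zero_add, zero_sub, mul_neg, neg_zero]
  ring

/-- The 1-soliton `u(x,t) = 2 (∂²/∂x²) log(1 + exp(√c (x − δ + c² t)))` solves the
integrable fifth-order KdV equation
`∂u/∂t = ∂⁵u/∂x⁵ + 10 u ∂³u/∂x³ + 20 (∂u/∂x)(∂²u/∂x²) + 30 u² ∂u/∂x` on all of `ℝ²`. -/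
theorem one_soliton_solves_fifth_order_KdV (c δ : ℝ) (hc : 0 < c) (u : ℝ → ℝ → ℝ)
    (hu : u = fun x t : ℝ =>
      2 * iteratedDeriv 2
        (fun y : ℝ => Real.log (1 + Real.exp (Real.sqrt c * (y - δ + c ^ 2 * t)))) x) :
    ∀ x t : ℝ,
      deriv (fun s : ℝ => u x s) t =
        iteratedDeriv 5 (fun y : ℝ => u y t) x
          + 10 * u x t * iteratedDeriv 3 (fun y : ℝ => u y t) x
          + 20 * deriv (fun y : ℝ => u y t) x * iteratedDeriv 2 (fun y : ℝ => u y t) x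
          + 30 * (u x t) ^ 2 * deriv (fun y : ℝ => u y t) x := by
  intro x t
  set a := √c
  have hca : c ^ 2 = a ^ 4 := by rw [show a ^ 4 = (a ^ 2) ^ 2 by ring, sq_sqrt hc.le]
  set σ : ℝ → ℝ → ℝ := fun y s => sigmoid (a * (y + (c ^ 2 * s - δ)))
  have hu_eval : ∀ y s, u y s = 2 * (a ^ 2 * (sigmoidDeriv X).eval (σ y s)) := by
    intro y s
    have harg : (fun y' => log (1 + exp (a * (y' - δ + c ^ 2 * s))))
        = fun y' => log (1 + exp (a * (y' + (c ^ 2 * s - δ)))) := by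
      funext y'; ring_nf
    rw [hu]
    simp only [harg, iteratedDeriv_succ_log_one_add_exp_affine 1, Function.iterate_one, σ]
  have hspace : ∀ n, iteratedDeriv n (fun y => u y t) x
      = 2 * (a ^ 2 * (a ^ n * (sigmoidDeriv^[n + 1] X).eval (σ x t))) := by
    intro n
    simp only [hu_eval, iteratedDeriv_const_mul_field, σ, iteratedDeriv_polynomial_eval_sigmoid_affine,
      Function.iterate_succ_apply]
  have htime : HasDerivAt (fun s => u x s)
      (2 * (a ^ 2 * ((sigmoidDeriv^[2] X).eval (σ x t) * (a * c ^ 2)))) t := by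
    have hg : HasDerivAt (fun s => a * (x + (c ^ 2 * s - δ))) (a * c ^ 2) t := by
      simpa using (((hasDerivAt_id t).const_mul (c ^ 2)).sub_const δ).const_add x |>.const_mul a
    simp only [hu_eval]
    exact ((hg.polynomial_eval_sigmoid _).const_mul _).const_mul _
  have hprofile := congrArg (eval (σ x t)) sigmoidDeriv_iterate_fifthOrderKdV
  simp only [eval_add, eval_mul, eval_pow, eval_ofNat] at hprofile
  rw [htime.deriv, ← iteratedDeriv_one, hspace 5, hspace 3, hspace 2, hspace 1, hu_eval, hca]
  linear_combination (2 * a ^ 7) * hprofile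
end

section
/- The 2-soliton profile U₂ satisfies the fourth-order stationary equation U₂''''(x) + 10U₂(x)U₂''(x) + 5(U₂'(x))² + 10U₂(x)³ − (c₁ + c₂)(U₂''(x) + 3U₂(x)²) + c₁c₂·U₂(x) = 0 for all x ∈ ℝ (equation (2-sol-ODE), i.e. H₃'(u) + (c₁+c₂)H₂'(u) + c₁c₂H₁'(u) = 0 at u = U₂). -/
open Real

namespace TwoSolAux

noncomputable def T (k1 k2 θ1 θ2 a : ℝ) (n : ℕ) (x : ℝ) : ℝ :=
  k1 ^ n * Real.exp (k1 * (x - θ1)) + k2 ^ n * Real.exp (k2 * (x - θ2))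
    + a * (k1 + k2) ^ n * Real.exp (k1 * (x - θ1) + k2 * (x - θ2))

noncomputable def S (k1 k2 θ1 θ2 a : ℝ) (x : ℝ) : ℝ := 1 + T k1 k2 θ1 θ2 a 0 x

lemma hasDerivAt_T (k1 k2 θ1 θ2 a : ℝ) (n : ℕ) (x : ℝ) :
    HasDerivAt (T k1 k2 θ1 θ2 a n) (T k1 k2 θ1 θ2 a (n + 1) x) x := by
  have h1 : HasDerivAt (fun x : ℝ => Real.exp (k1 * (x - θ1)))
      (Real.exp (k1 * (x - θ1)) * k1) x := by
    simpa using (((hasDerivAt_id x).sub_const θ1).const_mul k1).exp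
  have h2 : HasDerivAt (fun x : ℝ => Real.exp (k2 * (x - θ2)))
      (Real.exp (k2 * (x - θ2)) * k2) x := by
    simpa using (((hasDerivAt_id x).sub_const θ2).const_mul k2).exp
  have h12 : HasDerivAt (fun x : ℝ => Real.exp (k1 * (x - θ1) + k2 * (x - θ2)))
      (Real.exp (k1 * (x - θ1) + k2 * (x - θ2)) * (k1 + k2)) x := by
    simpa using ((((hasDerivAt_id x).sub_const θ1).const_mul k1).add
      (((hasDerivAt_id x).sub_const θ2).const_mul k2)).exp
  unfold T
  have h := ((h1.const_mul (k1 ^ n)).add (h2.const_mul (k2 ^ n))).add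
    (h12.const_mul (a * (k1 + k2) ^ n))
  refine h.congr_deriv ?_
  ring

lemma S_pos (k1 k2 θ1 θ2 a : ℝ) (ha : 0 ≤ a) (x : ℝ) : 0 < S k1 k2 θ1 θ2 a x := by
  simp only [S, T, pow_zero, one_mul, mul_one]
  have h1 := Real.exp_pos (k1 * (x - θ1))
  have h2 := Real.exp_pos (k2 * (x - θ2))
  have h3 : 0 ≤ a * Real.exp (k1 * (x - θ1) + k2 * (x - θ2)) :=
    mul_nonneg ha (Real.exp_pos _).le
  linarith

set_option maxHeartbeats 2000000 in
lemma key (k1 k2 e1 e2 a sx t1 t2 t3 t4 t5 t6 : ℝ)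
    (hA : a * (k1 + k2) ^ 2 = (k1 - k2) ^ 2) (hs0 : sx ≠ 0)
    (hsx : sx = 1 + (e1 + e2 + a * (e1 * e2)))
    (h1 : t1 = k1 ^ 1 * e1 + k2 ^ 1 * e2 + a * (k1 + k2) ^ 1 * (e1 * e2))
    (h2 : t2 = k1 ^ 2 * e1 + k2 ^ 2 * e2 + a * (k1 + k2) ^ 2 * (e1 * e2))
    (h3 : t3 = k1 ^ 3 * e1 + k2 ^ 3 * e2 + a * (k1 + k2) ^ 3 * (e1 * e2))
    (h4 : t4 = k1 ^ 4 * e1 + k2 ^ 4 * e2 + a * (k1 + k2) ^ 4 * (e1 * e2))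
    (h5 : t5 = k1 ^ 5 * e1 + k2 ^ 5 * e2 + a * (k1 + k2) ^ 5 * (e1 * e2))
    (h6 : t6 = k1 ^ 6 * e1 + k2 ^ 6 * e2 + a * (k1 + k2) ^ 6 * (e1 * e2)) :
    2 * ((t6 * sx ^ 5 - 6 * (t1 * t5 * sx ^ 4) - 15 * (t2 * t4 * sx ^ 4) - 10 * (t3 ^ 2 * sx ^ 4) + 30 * (t1 ^ 2 * t4 * sx ^ 3) + 120 * (t1 * t2 * t3 * sx ^ 3) + 30 * (t2 ^ 3 * sx ^ 3) - 120 * (t1 ^ 3 * t3 * sx ^ 2) - 270 * (t1 ^ 2 * t2 ^ 2 * sx ^ 2) + 360 * (t1 ^ 4 * t2 * sx) - 120 * (t1 ^ 6)) / sx ^ 6) + 10 * (2 * ((t2 * sx - t1 ^ 2) / sx ^ 2)) * (2 * ((t4 * sx ^ 3 - 4 * (t1 * t3 * sx ^ 2) - 3 * (t2 ^ 2 * sx ^ 2) + 12 * (t1 ^ 2 * t2 * sx) - 6 * (t1 ^ 4)) / sx ^ 4)) + 5 * (2 * ((t3 * sx ^ 2 - 3 * (t1 * t2 * sx) + 2 *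 (t1 ^ 3)) / sx ^ 3)) ^ 2 + 10 * (2 * ((t2 * sx - t1 ^ 2) / sx ^ 2)) ^ 3 - (k1 ^ 2 + k2 ^ 2) * (2 * ((t4 * sx ^ 3 - 4 * (t1 * t3 * sx ^ 2) - 3 * (t2 ^ 2 * sx ^ 2) + 12 * (t1 ^ 2 * t2 * sx) - 6 * (t1 ^ 4)) / sx ^ 4) + 3 * (2 * ((t2 * sx - t1 ^ 2) / sx ^ 2)) ^ 2) + k1 ^ 2 * k2 ^ 2 * (2 * ((t2 * sx - t1 ^ 2) / sx ^ 2)) = 0 := by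
  have hP : 2 * (t6 * sx ^ 5 - 6 * (t1 * t5 * sx ^ 4) - 15 * (t2 * t4 * sx ^ 4) - 10 * (t3 ^ 2 * sx ^ 4) + 30 * (t1 ^ 2 * t4 * sx ^ 3) + 120 * (t1 * t2 * t3 * sx ^ 3) + 30 * (t2 ^ 3 * sx ^ 3) - 120 * (t1 ^ 3 * t3 * sx ^ 2) - 270 * (t1 ^ 2 * t2 ^ 2 * sx ^ 2) + 360 * (t1 ^ 4 * t2 * sx) - 120 * (t1 ^ 6)) + 10 * (2 * (t2 * sx - t1 ^ 2)) * (2 * (t4 * sx ^ 3 - 4 * (t1 * t3 * sx ^ 2) - 3 * (t2 ^ 2 * sx ^ 2) + 12 * (t1 ^ 2 * t2 * sx) - 6 * (t1 ^ 4))) + 5 * (2 * (t3 * sx ^ 2 - 3 * (t1 * t2 * sx) + 2 * (t1 ^ 3))) ^ 2 + 10 * (2 * (t2 * sx - t1 ^ 2)) ^ 3 - (k1 ^ 2 + k2 ^ 2) * (2 * (t4 * sx ^ 3 - 4 * (t1 * t3 * sx ^ 2) - 3 * (t2 ^ 2 * sx ^ 2) + 12 * (t1 ^ 2 * t2 * sx)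 - 6 * (t1 ^ 4)) * sx ^ 2 + 3 * (2 * (t2 * sx - t1 ^ 2)) ^ 2 * sx ^ 2) + k1 ^ 2 * k2 ^ 2 * (2 * (t2 * sx - t1 ^ 2)) * sx ^ 4 = 0 := by
    subst hsx h1 h2 h3 h4 h5 h6
    linear_combination (4 * k1 ^ 3 * k2 * e1 ^ 5 * e2 ^ 5 * a ^ 4 + 16 * k1 ^ 3 * k2 * e1 ^ 5 * e2 ^ 4 * a ^ 3 + 24 * k1 ^ 3 * k2 * e1 ^ 5 * e2 ^ 3 * a ^ 2 + 16 * k1 ^ 3 * k2 * e1 ^ 5 * e2 ^ 2 * a + 4 * k1 ^ 3 * k2 * e1 ^ 5 * e2 + 16 * k1 ^ 3 * k2 * e1 ^ 4 * e2 ^ 5 * a ^ 3 + 16 * k1 ^ 3 * k2 * e1 ^ 4 * e2 ^ 4 * a ^ 3 + 48 * k1 ^ 3 * k2 * e1 ^ 4 * e2 ^ 4 * a ^ 2 + 48 * k1 ^ 3 * k2 * e1 ^ 4 * e2 ^ 3 * a ^ 2 + 48 * k1 ^ 3 * k2 * e1 ^ 4 * e2 ^ 3 * a + 48 * k1 ^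 3 * k2 * e1 ^ 4 * e2 ^ 2 * a + 16 * k1 ^ 3 * k2 * e1 ^ 4 * e2 ^ 2 + 16 * k1 ^ 3 * k2 * e1 ^ 4 * e2 + 24 * k1 ^ 3 * k2 * e1 ^ 3 * e2 ^ 5 * a ^ 2 + 48 * k1 ^ 3 * k2 * e1 ^ 3 * e2 ^ 4 * a ^ 2 + 48 * k1 ^ 3 * k2 * e1 ^ 3 * e2 ^ 4 * a + 24 * k1 ^ 3 * k2 * e1 ^ 3 * e2 ^ 3 * a ^ 2 + 96 * k1 ^ 3 * k2 * e1 ^ 3 * e2 ^ 3 * a + 24 * k1 ^ 3 * k2 * e1 ^ 3 * e2 ^ 3 + 48 * k1 ^ 3 * k2 * e1 ^ 3 * e2 ^ 2 * a + 48 * k1 ^ 3 * k2 * e1 ^ 3 * e2 ^ 2 + 24 * k1 ^ 3 * k2 * e1 ^ 3 * e2 + 16 * k1 ^ 3 * k2 * e1 ^ 2 * e2 ^ 5 * a + 48 * k1 ^ 3 * k2 * e1 ^ 2 * e2 ^ 4 * a + 16 * k1 ^ 3 * k2 * e1 ^ 2 * e2 ^ 4 + 48 * k1 ^ 3 * k2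 * e1 ^ 2 * e2 ^ 3 * a + 48 * k1 ^ 3 * k2 * e1 ^ 2 * e2 ^ 3 + 16 * k1 ^ 3 * k2 * e1 ^ 2 * e2 ^ 2 * a + 48 * k1 ^ 3 * k2 * e1 ^ 2 * e2 ^ 2 + 16 * k1 ^ 3 * k2 * e1 ^ 2 * e2 + 4 * k1 ^ 3 * k2 * e1 * e2 ^ 5 + 16 * k1 ^ 3 * k2 * e1 * e2 ^ 4 + 24 * k1 ^ 3 * k2 * e1 * e2 ^ 3 + 16 * k1 ^ 3 * k2 * e1 * e2 ^ 2 + 4 * k1 ^ 3 * k2 * e1 * e2 + 10 * k1 ^ 2 * k2 ^ 2 * e1 ^ 5 * e2 ^ 5 * a ^ 4 + 20 * k1 ^ 2 * k2 ^ 2 * e1 ^ 5 * e2 ^ 4 * a ^ 3 - 20 * k1 ^ 2 * k2 ^ 2 * e1 ^ 5 * e2 ^ 2 * a - 10 * k1 ^ 2 * k2 ^ 2 * e1 ^ 5 * e2 + 20 * k1 ^ 2 * k2 ^ 2 * e1 ^ 4 * e2 ^ 5 * a ^ 3 + 40 * k1 ^ 2 * k2 ^ 2 * e1 ^ 4 *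 e2 ^ 4 * a ^ 3 + 60 * k1 ^ 2 * k2 ^ 2 * e1 ^ 4 * e2 ^ 3 * a ^ 2 - 60 * k1 ^ 2 * k2 ^ 2 * e1 ^ 4 * e2 ^ 3 * a - 40 * k1 ^ 2 * k2 ^ 2 * e1 ^ 4 * e2 ^ 2 - 20 * k1 ^ 2 * k2 ^ 2 * e1 ^ 4 * e2 + 60 * k1 ^ 2 * k2 ^ 2 * e1 ^ 3 * e2 ^ 4 * a ^ 2 - 60 * k1 ^ 2 * k2 ^ 2 * e1 ^ 3 * e2 ^ 4 * a + 60 * k1 ^ 2 * k2 ^ 2 * e1 ^ 3 * e2 ^ 3 * a ^ 2 - 60 * k1 ^ 2 * k2 ^ 2 * e1 ^ 3 * e2 ^ 3 + 60 * k1 ^ 2 * k2 ^ 2 * e1 ^ 3 * e2 ^ 2 * a - 60 * k1 ^ 2 * k2 ^ 2 * e1 ^ 3 * e2 ^ 2 - 20 * k1 ^ 2 * k2 ^ 2 * e1 ^ 2 * e2 ^ 5 * a - 40 * k1 ^ 2 * k2 ^ 2 * e1 ^ 2 * e2 ^ 4 + 60 * k1 ^ 2 * k2 ^ 2 * e1 ^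 2 * e2 ^ 3 * a - 60 * k1 ^ 2 * k2 ^ 2 * e1 ^ 2 * e2 ^ 3 + 40 * k1 ^ 2 * k2 ^ 2 * e1 ^ 2 * e2 ^ 2 * a + 20 * k1 ^ 2 * k2 ^ 2 * e1 ^ 2 * e2 - 10 * k1 ^ 2 * k2 ^ 2 * e1 * e2 ^ 5 - 20 * k1 ^ 2 * k2 ^ 2 * e1 * e2 ^ 4 + 20 * k1 ^ 2 * k2 ^ 2 * e1 * e2 ^ 2 + 10 * k1 ^ 2 * k2 ^ 2 * e1 * e2 + 4 * k1 * k2 ^ 3 * e1 ^ 5 * e2 ^ 5 * a ^ 4 + 16 * k1 * k2 ^ 3 * e1 ^ 5 * e2 ^ 4 * a ^ 3 + 24 * k1 * k2 ^ 3 * e1 ^ 5 * e2 ^ 3 * a ^ 2 + 16 * k1 * k2 ^ 3 * e1 ^ 5 * e2 ^ 2 * a + 4 * k1 * k2 ^ 3 * e1 ^ 5 * e2 + 16 * k1 * k2 ^ 3 * e1 ^ 4 * e2 ^ 5 * a ^ 3 + 16 * k1 * k2 ^ 3 * e1 ^ 4 * e2 ^ 4 * a ^ 3 + 48 * k1 *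 k2 ^ 3 * e1 ^ 4 * e2 ^ 4 * a ^ 2 + 48 * k1 * k2 ^ 3 * e1 ^ 4 * e2 ^ 3 * a ^ 2 + 48 * k1 * k2 ^ 3 * e1 ^ 4 * e2 ^ 3 * a + 48 * k1 * k2 ^ 3 * e1 ^ 4 * e2 ^ 2 * a + 16 * k1 * k2 ^ 3 * e1 ^ 4 * e2 ^ 2 + 16 * k1 * k2 ^ 3 * e1 ^ 4 * e2 + 24 * k1 * k2 ^ 3 * e1 ^ 3 * e2 ^ 5 * a ^ 2 + 48 * k1 * k2 ^ 3 * e1 ^ 3 * e2 ^ 4 * a ^ 2 + 48 * k1 * k2 ^ 3 * e1 ^ 3 * e2 ^ 4 * a + 24 * k1 * k2 ^ 3 * e1 ^ 3 * e2 ^ 3 * a ^ 2 + 96 * k1 * k2 ^ 3 * e1 ^ 3 * e2 ^ 3 * a + 24 * k1 * k2 ^ 3 * e1 ^ 3 * e2 ^ 3 + 48 * k1 * k2 ^ 3 * e1 ^ 3 * e2 ^ 2 * a + 48 * k1 * k2 ^ 3 * e1 ^ 3 * e2 ^ 2 + 24 * k1 * k2 ^ 3 * e1 ^ 3 * e2 +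 16 * k1 * k2 ^ 3 * e1 ^ 2 * e2 ^ 5 * a + 48 * k1 * k2 ^ 3 * e1 ^ 2 * e2 ^ 4 * a + 16 * k1 * k2 ^ 3 * e1 ^ 2 * e2 ^ 4 + 48 * k1 * k2 ^ 3 * e1 ^ 2 * e2 ^ 3 * a + 48 * k1 * k2 ^ 3 * e1 ^ 2 * e2 ^ 3 + 16 * k1 * k2 ^ 3 * e1 ^ 2 * e2 ^ 2 * a + 48 * k1 * k2 ^ 3 * e1 ^ 2 * e2 ^ 2 + 16 * k1 * k2 ^ 3 * e1 ^ 2 * e2 + 4 * k1 * k2 ^ 3 * e1 * e2 ^ 5 + 16 * k1 * k2 ^ 3 * e1 * e2 ^ 4 + 24 * k1 * k2 ^ 3 * e1 * e2 ^ 3 + 16 * k1 * k2 ^ 3 * e1 * e2 ^ 2 + 4 * k1 * k2 ^ 3 * e1 * e2) * hA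
  have hstep : 2 * ((t6 * sx ^ 5 - 6 * (t1 * t5 * sx ^ 4) - 15 * (t2 * t4 * sx ^ 4) - 10 * (t3 ^ 2 * sx ^ 4) + 30 * (t1 ^ 2 * t4 * sx ^ 3) + 120 * (t1 * t2 * t3 * sx ^ 3) + 30 * (t2 ^ 3 * sx ^ 3) - 120 * (t1 ^ 3 * t3 * sx ^ 2) - 270 * (t1 ^ 2 * t2 ^ 2 * sx ^ 2) + 360 * (t1 ^ 4 * t2 * sx) - 120 * (t1 ^ 6)) / sx ^ 6) + 10 * (2 * ((t2 * sx - t1 ^ 2) / sx ^ 2)) * (2 * ((t4 * sx ^ 3 - 4 * (t1 * t3 * sx ^ 2) - 3 * (t2 ^ 2 * sx ^ 2) + 12 * (t1 ^ 2 * t2 * sx) - 6 * (t1 ^ 4)) / sx ^ 4)) + 5 * (2 * ((t3 * sx ^ 2 - 3 * (t1 * t2 * sx) + 2 * (t1 ^ 3)) / sx ^ 3)) ^ 2 + 10 * (2 * ((t2 * sx - t1 ^ 2) / sx ^ 2)) ^ 3 - (k1 ^ 2 + k2 ^ 2) * (2 * ((t4 * sx ^ 3 - 4 * (t1 * t3 *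 sx ^ 2) - 3 * (t2 ^ 2 * sx ^ 2) + 12 * (t1 ^ 2 * t2 * sx) - 6 * (t1 ^ 4)) / sx ^ 4) + 3 * (2 * ((t2 * sx - t1 ^ 2) / sx ^ 2)) ^ 2) + k1 ^ 2 * k2 ^ 2 * (2 * ((t2 * sx - t1 ^ 2) / sx ^ 2)) = (2 * (t6 * sx ^ 5 - 6 * (t1 * t5 * sx ^ 4) - 15 * (t2 * t4 * sx ^ 4) - 10 * (t3 ^ 2 * sx ^ 4) + 30 * (t1 ^ 2 * t4 * sx ^ 3) + 120 * (t1 * t2 * t3 * sx ^ 3) + 30 * (t2 ^ 3 * sx ^ 3) - 120 * (t1 ^ 3 * t3 * sx ^ 2) - 270 * (t1 ^ 2 * t2 ^ 2 * sx ^ 2) + 360 * (t1 ^ 4 * t2 * sx) - 120 * (t1 ^ 6)) + 10 * (2 * (t2 * sx - t1 ^ 2)) * (2 * (t4 * sx ^ 3 - 4 * (t1 * t3 * sx ^ 2) - 3 * (t2 ^ 2 * sx ^ 2) + 12 * (t1 ^ 2 * t2 * sx) - 6 * (t1 ^ 4))) + 5 * (2 * (t3 * sx ^ 2 - 3 * (t1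 * t2 * sx) + 2 * (t1 ^ 3))) ^ 2 + 10 * (2 * (t2 * sx - t1 ^ 2)) ^ 3 - (k1 ^ 2 + k2 ^ 2) * (2 * (t4 * sx ^ 3 - 4 * (t1 * t3 * sx ^ 2) - 3 * (t2 ^ 2 * sx ^ 2) + 12 * (t1 ^ 2 * t2 * sx) - 6 * (t1 ^ 4)) * sx ^ 2 + 3 * (2 * (t2 * sx - t1 ^ 2)) ^ 2 * sx ^ 2) + k1 ^ 2 * k2 ^ 2 * (2 * (t2 * sx - t1 ^ 2)) * sx ^ 4) / sx ^ 6 := by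
    field_simp
  rw [hstep, hP, zero_div]

set_option maxHeartbeats 1000000 in
lemma main (k1 k2 θ1 θ2 : ℝ) (hk1 : 0 < k1) (hk2 : 0 < k2) (U : ℝ → ℝ)
    (hU : U = fun x => 2 * iteratedDeriv 2
      (fun y => Real.log (S k1 k2 θ1 θ2 (((k1 - k2) / (k1 + k2)) ^ 2) y)) x) :
    ∀ x : ℝ,
      iteratedDeriv 4 U x + 10 * U x * iteratedDeriv 2 U x + 5 * (deriv U x) ^ 2
        + 10 * (U x) ^ 3 - (k1 ^ 2 + k2 ^ 2) * (iteratedDeriv 2 U x + 3 * (U x) ^ 2)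
        + k1 ^ 2 * k2 ^ 2 * U x = 0 := by
  set a : ℝ := ((k1 - k2) / (k1 + k2)) ^ 2 with ha
  have ha0 : 0 ≤ a := sq_nonneg _
  set t : ℕ → ℝ → ℝ := T k1 k2 θ1 θ2 a with htdef
  set s : ℝ → ℝ := S k1 k2 θ1 θ2 a with hsdef
  have ht : ∀ (n : ℕ) (x : ℝ), HasDerivAt (t n) (t (n + 1) x) x :=
    fun n x => hasDerivAt_T k1 k2 θ1 θ2 a n x
  have hs : ∀ x : ℝ, HasDerivAt s (t 1 x) x :=
    fun x => (hasDerivAt_T k1 k2 θ1 θ2 a 0 x).const_add 1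
  have hspos : ∀ x : ℝ, 0 < s x := fun x => S_pos k1 k2 θ1 θ2 a ha0 x
  have hlog : ∀ x : ℝ, HasDerivAt (fun y => Real.log (s y)) (t 1 x / s x) x :=
    fun x => (hs x).log (hspos x).ne'
  have hW1 : ∀ x : ℝ, HasDerivAt (fun x => t 1 x / s x) ((t 2 x * s x - t 1 x ^ 2) / s x ^ 2) x := by
    intro x
    have h := (ht 1 x).div (hs x) (hspos x).ne'
    refine h.congr_deriv ?_
    field_simp [(hspos x).ne']
  have hN2 : ∀ x, HasDerivAt (fun x => t 2 x * s x - t 1 x ^ 2) (t 3 x * s x - t 1 x * t 2 x) x := by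
    intro x
    have h := (((ht 2 x).mul (hs x)).sub ((ht 1 x).pow 2))
    refine h.congr_deriv ?_
    ring
  have hW2 : ∀ x, HasDerivAt (fun x => (t 2 x * s x - t 1 x ^ 2) / s x ^ 2)
      ((t 3 x * s x ^ 2 - 3 * (t 1 x * t 2 x * s x) + 2 * (t 1 x ^ 3)) / s x ^ 3) x := by
    intro x
    have h := (hN2 x).div ((hs x).pow 2) (pow_ne_zero 2 (hspos x).ne')
    refine h.congr_deriv ?_
    simp only [Pi.pow_apply, Pi.mul_apply, Nat.cast_ofNat]
    field_simp [(hspos x).ne']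
    ring
  have hN3 : ∀ x, HasDerivAt (fun x => t 3 x * s x ^ 2 - 3 * (t 1 x * t 2 x * s x) + 2 * (t 1 x ^ 3)) (t 4 x * s x ^ 2 - t 1 x * t 3 x * s x - 3 * (t 2 x ^ 2 * s x) + 3 * (t 1 x ^ 2 * t 2 x)) x := by
    intro x
    have h := ((((ht 3 x).mul ((hs x).pow 2)).sub ((((ht 1 x).mul (ht 2 x)).mul (hs x)).const_mul 3)).add (((ht 1 x).pow 3).const_mul 2))
    refine h.congr_deriv ?_
    simp only [Pi.pow_apply, Pi.mul_apply, Nat.cast_ofNat]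
    ring
  have hW3 : ∀ x, HasDerivAt (fun x => (t 3 x * s x ^ 2 - 3 * (t 1 x * t 2 x * s x) + 2 * (t 1 x ^ 3)) / s x ^ 3)
      ((t 4 x * s x ^ 3 - 4 * (t 1 x * t 3 x * s x ^ 2) - 3 * (t 2 x ^ 2 * s x ^ 2) + 12 * (t 1 x ^ 2 * t 2 x * s x) - 6 * (t 1 x ^ 4)) / s x ^ 4) x := by
    intro x
    have h := (hN3 x).div ((hs x).pow 3) (pow_ne_zero 3 (hspos x).ne')
    refine h.congr_deriv ?_
    simp only [Pi.pow_apply, Pi.mul_apply, Nat.cast_ofNat]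
    field_simp [(hspos x).ne']
    ring
  have hN4 : ∀ x, HasDerivAt (fun x => t 4 x * s x ^ 3 - 4 * (t 1 x * t 3 x * s x ^ 2) - 3 * (t 2 x ^ 2 * s x ^ 2) + 12 * (t 1 x ^ 2 * t 2 x * s x) - 6 * (t 1 x ^ 4)) (t 5 x * s x ^ 3 - t 1 x * t 4 x * s x ^ 2 - 10 * (t 2 x * t 3 x * s x ^ 2) + 4 * (t 1 x ^ 2 * t 3 x * s x) + 18 * (t 1 x * t 2 x ^ 2 * s x) - 12 * (t 1 x ^ 3 * t 2 x)) x := by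
    intro x
    have h := ((((((ht 4 x).mul ((hs x).pow 3)).sub ((((ht 1 x).mul (ht 3 x)).mul ((hs x).pow 2)).const_mul 4)).sub ((((ht 2 x).pow 2).mul ((hs x).pow 2)).const_mul 3)).add (((((ht 1 x).pow 2).mul (ht 2 x)).mul (hs x)).const_mul 12)).sub (((ht 1 x).pow 4).const_mul 6))
    refine h.congr_deriv ?_
    simp only [Pi.pow_apply, Pi.mul_apply, Nat.cast_ofNat]
    ring
  have hW4 : ∀ x, HasDerivAt (fun x => (t 4 x * s x ^ 3 - 4 * (t 1 x * t 3 x * s x ^ 2) - 3 * (t 2 x ^ 2 * s x ^ 2) + 12 * (t 1 x ^ 2 * t 2 x * s x) - 6 * (t 1 x ^ 4)) / s x ^ 4)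
      ((t 5 x * s x ^ 4 - 5 * (t 1 x * t 4 x * s x ^ 3) - 10 * (t 2 x * t 3 x * s x ^ 3) + 20 * (t 1 x ^ 2 * t 3 x * s x ^ 2) + 30 * (t 1 x * t 2 x ^ 2 * s x ^ 2) - 60 * (t 1 x ^ 3 * t 2 x * s x) + 24 * (t 1 x ^ 5)) / s x ^ 5) x := by
    intro x
    have h := (hN4 x).div ((hs x).pow 4) (pow_ne_zero 4 (hspos x).ne')
    refine h.congr_deriv ?_
    simp only [Pi.pow_apply, Pi.mul_apply, Nat.cast_ofNat]
    field_simp [(hspos x).ne']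
    ring
  have hN5 : ∀ x, HasDerivAt (fun x => t 5 x * s x ^ 4 - 5 * (t 1 x * t 4 x * s x ^ 3) - 10 * (t 2 x * t 3 x * s x ^ 3) + 20 * (t 1 x ^ 2 * t 3 x * s x ^ 2) + 30 * (t 1 x * t 2 x ^ 2 * s x ^ 2) - 60 * (t 1 x ^ 3 * t 2 x * s x) + 24 * (t 1 x ^ 5)) (t 6 x * s x ^ 4 - t 1 x * t 5 x * s x ^ 3 - 15 * (t 2 x * t 4 x * s x ^ 3) - 10 * (t 3 x ^ 2 * s x ^ 3) + 5 * (t 1 x ^ 2 * t 4 x * s x ^ 2) + 70 * (t 1 x * t 2 x * t 3 x * s x ^ 2) + 30 * (t 2 x ^ 3 * s x ^ 2) - 20 * (t 1 x ^ 3 * t 3 x * s x) - 120 * (t 1 x ^ 2 * t 2 x ^ 2 * s x) + 60 * (t 1 x ^ 4 * t 2 x)) x := by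
    intro x
    have h := ((((((((ht 5 x).mul ((hs x).pow 4)).sub ((((ht 1 x).mul (ht 4 x)).mul ((hs x).pow 3)).const_mul 5)).sub ((((ht 2 x).mul (ht 3 x)).mul ((hs x).pow 3)).const_mul 10)).add (((((ht 1 x).pow 2).mul (ht 3 x)).mul ((hs x).pow 2)).const_mul 20)).add ((((ht 1 x).mul ((ht 2 x).pow 2)).mul ((hs x).pow 2)).const_mul 30)).sub (((((ht 1 x).pow 3).mul (ht 2 x)).mul (hs x)).const_mul 60)).add (((ht 1 x).pow 5).const_mul 24))
    refine h.congr_deriv ?_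
    simp only [Pi.pow_apply, Pi.mul_apply, Nat.cast_ofNat]
    ring
  have hW5 : ∀ x, HasDerivAt (fun x => (t 5 x * s x ^ 4 - 5 * (t 1 x * t 4 x * s x ^ 3) - 10 * (t 2 x * t 3 x * s x ^ 3) + 20 * (t 1 x ^ 2 * t 3 x * s x ^ 2) + 30 * (t 1 x * t 2 x ^ 2 * s x ^ 2) - 60 * (t 1 x ^ 3 * t 2 x * s x) + 24 * (t 1 x ^ 5)) / s x ^ 5)
      ((t 6 x * s x ^ 5 - 6 * (t 1 x * t 5 x * s x ^ 4) - 15 * (t 2 x * t 4 x * s x ^ 4) - 10 * (t 3 x ^ 2 * s x ^ 4) + 30 * (t 1 x ^ 2 * t 4 x * s x ^ 3) + 120 * (t 1 x * t 2 x * t 3 x * s x ^ 3) + 30 * (t 2 x ^ 3 * s x ^ 3) - 120 * (t 1 x ^ 3 * t 3 x * s x ^ 2) - 270 * (t 1 x ^ 2 * t 2 x ^ 2 * s x ^ 2) + 360 * (t 1 x ^ 4 * t 2 x * s x) - 120 * (t 1 x ^ 6)) / s x ^ 6) x := by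
    intro x
    have h := (hN5 x).div ((hs x).pow 5) (pow_ne_zero 5 (hspos x).ne')
    refine h.congr_deriv ?_
    simp only [Pi.pow_apply, Pi.mul_apply, Nat.cast_ofNat]
    field_simp [(hspos x).ne']
    ring
  have hd0 : deriv (fun y => Real.log (s y)) = fun x => t 1 x / s x :=
    funext fun x => (hlog x).deriv
  have hd1 : deriv (fun x => t 1 x / s x) = fun x => (t 2 x * s x - t 1 x ^ 2) / s x ^ 2 :=
    funext fun x => (hW1 x).deriv
  have hU2 : U = fun x => 2 * ((t 2 x * s x - t 1 x ^ 2) / s x ^ 2) := by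
    rw [hU]
    funext x
    rw [iteratedDeriv_succ, iteratedDeriv_one, hd0, hd1]
  have hdU : deriv U = fun x => 2 * ((t 3 x * s x ^ 2 - 3 * (t 1 x * t 2 x * s x) + 2 * (t 1 x ^ 3)) / s x ^ 3) := by
    rw [hU2]
    exact funext fun x => ((hW2 x).const_mul 2).deriv
  have hd2U : iteratedDeriv 2 U = fun x => 2 * ((t 4 x * s x ^ 3 - 4 * (t 1 x * t 3 x * s x ^ 2) - 3 * (t 2 x ^ 2 * s x ^ 2) + 12 * (t 1 x ^ 2 * t 2 x * s x) - 6 * (t 1 x ^ 4)) / s x ^ 4) := by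
    rw [iteratedDeriv_succ, iteratedDeriv_one, hdU]
    exact funext fun x => ((hW3 x).const_mul 2).deriv
  have hd3U : deriv (iteratedDeriv 2 U) = fun x => 2 * ((t 5 x * s x ^ 4 - 5 * (t 1 x * t 4 x * s x ^ 3) - 10 * (t 2 x * t 3 x * s x ^ 3) + 20 * (t 1 x ^ 2 * t 3 x * s x ^ 2) + 30 * (t 1 x * t 2 x ^ 2 * s x ^ 2) - 60 * (t 1 x ^ 3 * t 2 x * s x) + 24 * (t 1 x ^ 5)) / s x ^ 5) := by
    rw [hd2U]
    exact funext fun x => ((hW4 x).const_mul 2).deriv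
  have hd4U : iteratedDeriv 4 U = fun x => 2 * ((t 6 x * s x ^ 5 - 6 * (t 1 x * t 5 x * s x ^ 4) - 15 * (t 2 x * t 4 x * s x ^ 4) - 10 * (t 3 x ^ 2 * s x ^ 4) + 30 * (t 1 x ^ 2 * t 4 x * s x ^ 3) + 120 * (t 1 x * t 2 x * t 3 x * s x ^ 3) + 30 * (t 2 x ^ 3 * s x ^ 3) - 120 * (t 1 x ^ 3 * t 3 x * s x ^ 2) - 270 * (t 1 x ^ 2 * t 2 x ^ 2 * s x ^ 2) + 360 * (t 1 x ^ 4 * t 2 x * s x) - 120 * (t 1 x ^ 6)) / s x ^ 6) := by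
    have e1 : iteratedDeriv 4 U = deriv (iteratedDeriv 3 U) := iteratedDeriv_succ
    have e2 : iteratedDeriv 3 U = deriv (iteratedDeriv 2 U) := iteratedDeriv_succ
    rw [e1, e2, hd3U]
    exact funext fun x => ((hW5 x).const_mul 2).deriv
  intro x
  have hk : k1 + k2 ≠ 0 := by positivity
  have hA : a * (k1 + k2) ^ 2 = (k1 - k2) ^ 2 := by
    rw [ha]
    field_simp
  rw [hd4U, hd2U, hdU, hU2]
  exact key k1 k2 (Real.exp (k1 * (x - θ1))) (Real.exp (k2 * (x - θ2))) a (s x)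
    (t 1 x) (t 2 x) (t 3 x) (t 4 x) (t 5 x) (t 6 x) hA (hspos x).ne'
    (by simp only [hsdef, S, T, pow_zero, one_mul, mul_one, Real.exp_add])
    (by simp only [htdef, T, pow_one, Real.exp_add])
    (by simp only [htdef, T, Real.exp_add])
    (by simp only [htdef, T, Real.exp_add])
    (by simp only [htdef, T, Real.exp_add])
    (by simp only [htdef, T, Real.exp_add])
    (by simp only [htdef, T, Real.exp_add])

end TwoSolAux

/-- The 2-soliton profile `U₂ = 2 (d²/dx²) log τ` satisfies the fourth-order stationary
equation `U₂'''' + 10 U₂ U₂'' + 5 (U₂')² + 10 U₂³ − (c₁+c₂)(U₂'' + 3U₂²) + c₁c₂ U₂ = 0`. -/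
theorem two_soliton_stationary_ode (c₁ c₂ θ₁ θ₂ : ℝ) (hc₁ : 0 < c₁) (hc₂ : 0 < c₂)
    (hne : c₁ ≠ c₂) (τ U : ℝ → ℝ)
    (hτ : τ = fun x : ℝ =>
      1 + Real.exp (Real.sqrt c₁ * (x - θ₁)) + Real.exp (Real.sqrt c₂ * (x - θ₂))
        + ((Real.sqrt c₁ - Real.sqrt c₂) / (Real.sqrt c₁ + Real.sqrt c₂)) ^ 2
          * Real.exp (Real.sqrt c₁ * (x - θ₁) + Real.sqrt c₂ * (x - θ₂)))
    (hU : U = fun x : ℝ => 2 * iteratedDeriv 2 (fun y : ℝ => Real.log (τ y)) x) :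
    ∀ x : ℝ,
      iteratedDeriv 4 U x + 10 * U x * iteratedDeriv 2 U x + 5 * (deriv U x) ^ 2
        + 10 * (U x) ^ 3 - (c₁ + c₂) * (iteratedDeriv 2 U x + 3 * (U x) ^ 2)
        + c₁ * c₂ * U x = 0 := by
  have hk1 : 0 < Real.sqrt c₁ := Real.sqrt_pos.2 hc₁
  have hk2 : 0 < Real.sqrt c₂ := Real.sqrt_pos.2 hc₂
  have hsq1 : Real.sqrt c₁ ^ 2 = c₁ := Real.sq_sqrt hc₁.le
  have hsq2 : Real.sqrt c₂ ^ 2 = c₂ := Real.sq_sqrt hc₂.le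
  have hτ' : τ = TwoSolAux.S (Real.sqrt c₁) (Real.sqrt c₂) θ₁ θ₂
      (((Real.sqrt c₁ - Real.sqrt c₂) / (Real.sqrt c₁ + Real.sqrt c₂)) ^ 2) := by
    funext x
    rw [hτ]
    simp only [TwoSolAux.S, TwoSolAux.T, pow_zero, one_mul, mul_one]
    ring
  have h := TwoSolAux.main (Real.sqrt c₁) (Real.sqrt c₂) θ₁ θ₂ hk1 hk2 U
    (by rw [hU, hτ'])
  intro x
  have hx := h x
  rw [hsq1, hsq2] at hx
  exact hx
end

section
/- The function u(x,t) = 2·(∂²/∂x²) log τ(x,t), with τ(x,t) = 1 + exp(√c₁·(x − δ₁ − c₁t)) + exp(√c₂·(x − δ₂ − c₂t)) + ((√c₁ − √c₂)/(√c₁ + √c₂))²·exp(√c₁·(x − δ₁ − c₁t) + √c₂·(x − δ₂ − c₂t)), is a solution of the Korteweg–de Vries equation ∂u/∂t = −∂³u/∂x³ − 6u·∂u/∂x for all (x,t) ∈ ℝ². -/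
/-!
Write `ρⱼ = ∂ₓʲτ / τ`. These satisfy `∂ₓ ρⱼ = ρⱼ₊₁ - ρⱼ ρ₁`, so the `x`-derivatives of `log τ` are
the cumulants of the "moments" `ρⱼ`: `∂ₓ² log τ = ρ₂ - ρ₁²`, and so on. In these variables the
KdV residual of `u = 2 ∂ₓ² log τ` is `2 ∂ₓ (∂ₓ∂ₜ log τ + ∂ₓ⁴ log τ + 6 (∂ₓ² log τ)²)`, and the
bracket is Hirota's bilinear expression `(DₓDₜ + Dₓ⁴) τ • τ / (2 τ²)`. So `u` solves KdV as soon
as `τ` solves the bilinear equation. For `τ = 1 + A e^{η₁} + B e^{η₂} + a A B e^{η₁ + η₂}` with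
`ηᵢ = kᵢ x - kᵢ³ t` (here `kᵢ = √cᵢ`, `A = e^{-k₁δ₁}`, `B = e^{-k₂δ₂}`), the bilinear expression is
`3 k₁ k₂ A B (a (k₁ + k₂)² - (k₁ - k₂)²) e^{η₁ + η₂}`, which vanishes for
`a = ((k₁ - k₂) / (k₁ + k₂))²`.
-/

open Real

theorem HasDerivAt.div' {f g : ℝ → ℝ} {f' g' x : ℝ} (hf : HasDerivAt f f' x)
    (hg : HasDerivAt g g' x) (hx : g x ≠ 0) :
    HasDerivAt (fun y => f y / g y) (f' / g x - f x / g x * (g' / g x)) x :=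
  (hf.div hg hx).congr_deriv (by field_simp)

section Cumulants

variable {ρ : ℕ → ℝ → ℝ}

theorem hasDerivAt_cumulant_two (hρ : ∀ j y, HasDerivAt (ρ j) (ρ (j + 1) y - ρ j y * ρ 1 y) y)
    (x : ℝ) :
    HasDerivAt (fun y => ρ 2 y - ρ 1 y ^ 2) (ρ 3 x - 3 * (ρ 1 x * ρ 2 x) + 2 * ρ 1 x ^ 3) x :=
  ((hρ 2 x).sub ((hρ 1 x).pow 2)).congr_deriv (by norm_num only [Pi.pow_apply]; ring)

theorem hasDerivAt_cumulant_three (hρ : ∀ j y, HasDerivAt (ρ j) (ρ (j + 1) y - ρ j y * ρ 1 y) y)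
    (x : ℝ) :
    HasDerivAt (fun y => ρ 3 y - 3 * (ρ 1 y * ρ 2 y) + 2 * ρ 1 y ^ 3)
      (ρ 4 x - 4 * (ρ 1 x * ρ 3 x) - 3 * ρ 2 x ^ 2 + 12 * (ρ 1 x ^ 2 * ρ 2 x) - 6 * ρ 1 x ^ 4) x :=
  (((hρ 3 x).sub (((hρ 1 x).mul (hρ 2 x)).const_mul 3)).add
    (((hρ 1 x).pow 3).const_mul 2)).congr_deriv
      (by norm_num only [Pi.pow_apply]; ring)

theorem hasDerivAt_cumulant_four (hρ : ∀ j y, HasDerivAt (ρ j) (ρ (j + 1) y - ρ j y * ρ 1 y) y)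
    (x : ℝ) :
    HasDerivAt
      (fun y => ρ 4 y - 4 * (ρ 1 y * ρ 3 y) - 3 * ρ 2 y ^ 2 + 12 * (ρ 1 y ^ 2 * ρ 2 y)
        - 6 * ρ 1 y ^ 4)
      (ρ 5 x - 5 * (ρ 1 x * ρ 4 x) - 10 * (ρ 2 x * ρ 3 x) + 20 * (ρ 1 x ^ 2 * ρ 3 x)
        + 30 * (ρ 1 x * ρ 2 x ^ 2) - 60 * (ρ 1 x ^ 3 * ρ 2 x) + 24 * ρ 1 x ^ 5) x :=
  (((((hρ 4 x).sub (((hρ 1 x).mul (hρ 3 x)).const_mul 4)).sub (((hρ 2 x).pow 2).const_mul 3)).add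
    ((((hρ 1 x).pow 2).mul (hρ 2 x)).const_mul 12)).sub
    (((hρ 1 x).pow 4).const_mul 6)).congr_deriv
      (by norm_num only [Pi.pow_apply]; ring)

theorem iteratedDeriv_three_cumulant_two
    (hρ : ∀ j y, HasDerivAt (ρ j) (ρ (j + 1) y - ρ j y * ρ 1 y) y) (x : ℝ) :
    iteratedDeriv 3 (fun y => ρ 2 y - ρ 1 y ^ 2) x =
      ρ 5 x - 5 * (ρ 1 x * ρ 4 x) - 10 * (ρ 2 x * ρ 3 x) + 20 * (ρ 1 x ^ 2 * ρ 3 x)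
        + 30 * (ρ 1 x * ρ 2 x ^ 2) - 60 * (ρ 1 x ^ 3 * ρ 2 x) + 24 * ρ 1 x ^ 5 := by
  rw [iteratedDeriv_succ, iteratedDeriv_succ, iteratedDeriv_one,
    funext fun y => (hasDerivAt_cumulant_two hρ y).deriv,
    funext fun y => (hasDerivAt_cumulant_three hρ y).deriv, (hasDerivAt_cumulant_four hρ x).deriv]

end Cumulants

theorem iteratedDeriv_two_log {f : ℕ → ℝ → ℝ} (hf : ∀ j y, HasDerivAt (f j) (f (j + 1) y) y)
    (hf₀ : ∀ y, f 0 y ≠ 0) (x : ℝ) :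
    iteratedDeriv 2 (fun y => log (f 0 y)) x = f 2 x / f 0 x - (f 1 x / f 0 x) ^ 2 := by
  rw [iteratedDeriv_succ, iteratedDeriv_one,
    funext fun y => ((hf 0 y).log (hf₀ y)).deriv, ((hf 1 x).div' (hf 0 x) (hf₀ x)).deriv]
  ring

def IsKdVSolution (u : ℝ → ℝ → ℝ) : Prop :=
  ∀ x t, deriv (fun s => u x s) t =
    -(iteratedDeriv 3 (fun y => u y t) x) - 6 * u x t * deriv (fun y => u y t) x

/-- `(DₓDₜ + Dₓ⁴) τ • τ / 2`, in terms of `T j = ∂ₓʲ τ` and `S j = ∂ₜ ∂ₓʲ τ`. -/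
def hirotaKdV (T S : ℕ → ℝ → ℝ → ℝ) (x t : ℝ) : ℝ :=
  T 0 x t * S 1 x t - T 1 x t * S 0 x t + T 0 x t * T 4 x t - 4 * (T 1 x t * T 3 x t)
    + 3 * T 2 x t ^ 2

theorem isKdVSolution_of_hirotaKdV_eq_zero {T S : ℕ → ℝ → ℝ → ℝ} (hT₀ : ∀ x t, T 0 x t ≠ 0)
    (hTx : ∀ j x t, HasDerivAt (T j · t) (T (j + 1) x t) x)
    (hTt : ∀ j x t, HasDerivAt (T j x ·) (S j x t) t)
    (hSx : ∀ j x t, HasDerivAt (S j · t) (S (j + 1) x t) x)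
    (hH : ∀ x t, hirotaKdV T S x t = 0) :
    IsKdVSolution fun x t => 2 * iteratedDeriv 2 (fun y => log (T 0 y t)) x := by
  intro x t
  simp only [iteratedDeriv_two_log (fun j y => hTx j y _) (hT₀ · _), iteratedDeriv_const_mul_field,
    deriv_const_mul_field]
  have hρ (j : ℕ) (y : ℝ) := (hTx j y t).div' (hTx 0 y t) (hT₀ y t)
  have hσ (j : ℕ) (y : ℝ) := (hSx j y t).div' (hTx 0 y t) (hT₀ y t)
  have hρt (j : ℕ) := (hTt j x t).div' (hTt 0 x t) (hT₀ x t)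
  -- `∂ₓ∂ₜ log τ + ∂ₓ⁴ log τ + 6 (∂ₓ² log τ)² = hirotaKdV T S / τ²`
  have hbilinear (y : ℝ) : S 1 y t / T 0 y t - T 1 y t / T 0 y t * (S 0 y t / T 0 y t)
      + T 4 y t / T 0 y t - 4 * (T 1 y t / T 0 y t * (T 3 y t / T 0 y t))
      + 3 * (T 2 y t / T 0 y t) ^ 2 = 0 := by
    rw [← zero_div (T 0 y t ^ 2), ← hH y t, hirotaKdV]
    field_simp [hT₀ y t]
  have hbilinear_x : HasDerivAt (fun _ => (0 : ℝ)) _ x :=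
    ((((((hσ 1 x).sub ((hρ 1 x).mul (hσ 0 x))).add (hρ 4 x)).sub
      (((hρ 1 x).mul (hρ 3 x)).const_mul 4)).add (((hρ 2 x).pow 2).const_mul 3))
      |>.congr_of_eventuallyEq (.of_forall fun y => (hbilinear y).symm))
  norm_num only at hbilinear_x
  have hu_t : HasDerivAt (fun s => T 2 x s / T 0 x s - (T 1 x s / T 0 x s) ^ 2) _ t :=
    (hρt 2).sub ((hρt 1).pow 2)
  rw [hu_t.deriv, iteratedDeriv_three_cumulant_two hρ, (hasDerivAt_cumulant_two hρ x).deriv]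
  linear_combination 2 * hbilinear_x.unique (hasDerivAt_const x 0)

section ExpSum

variable {n : ℕ} (c p ω : Fin n → ℝ)

noncomputable def expSum (x t : ℝ) : ℝ := ∑ i, c i * exp (p i * x + ω i * t)

theorem hasDerivAt_expSum_x (x t : ℝ) :
    HasDerivAt (expSum c p ω · t) (expSum (c * p) p ω x t) x :=
  HasDerivAt.fun_sum fun i _ => ((((hasDerivAt_id' x).const_mul (p i)).add_const
    (ω i * t)).exp.const_mul (c i)).congr_deriv (by simp only [Pi.mul_apply]; ring)

theorem hasDerivAt_expSum_t (x t : ℝ) :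
    HasDerivAt (expSum c p ω x ·) (expSum (c * ω) p ω x t) t :=
  HasDerivAt.fun_sum fun i _ => ((((hasDerivAt_id' t).const_mul (ω i)).const_add
    (p i * x)).exp.const_mul (c i)).congr_deriv (by simp only [Pi.mul_apply]; ring)

theorem isKdVSolution_of_hirotaKdV_expSum_eq_zero (h₀ : ∀ x t, expSum c p ω x t ≠ 0)
    (hH : ∀ x t, hirotaKdV (fun j => expSum (c * p ^ j) p ω)
      (fun j => expSum (c * p ^ j * ω) p ω) x t = 0) :
    IsKdVSolution fun x t => 2 * iteratedDeriv 2 (fun y => log (expSum c p ω y t)) x := by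
  have hTx (j : ℕ) (x t : ℝ) :
      HasDerivAt (expSum (c * p ^ j) p ω · t) (expSum (c * p ^ (j + 1)) p ω x t) x := by
    convert hasDerivAt_expSum_x (c * p ^ j) p ω x t using 2; ring
  have hSx (j : ℕ) (x t : ℝ) :
      HasDerivAt (expSum (c * p ^ j * ω) p ω · t) (expSum (c * p ^ (j + 1) * ω) p ω x t) x := by
    convert hasDerivAt_expSum_x (c * p ^ j * ω) p ω x t using 2; ring
  simpa only [pow_zero, mul_one] using isKdVSolution_of_hirotaKdV_eq_zero
    (by simpa only [pow_zero, mul_one] using h₀) hTx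
    (fun j x t => hasDerivAt_expSum_t (c * p ^ j) p ω x t) hSx hH

end ExpSum

def twoSolitonCoeff (a A B : ℝ) : Fin 4 → ℝ := ![1, A, B, a * A * B]

def twoSolitonWavenumber (k₁ k₂ : ℝ) : Fin 4 → ℝ := ![0, k₁, k₂, k₁ + k₂]

def twoSolitonFrequency (k₁ k₂ : ℝ) : Fin 4 → ℝ := ![0, -k₁ ^ 3, -k₂ ^ 3, -k₁ ^ 3 - k₂ ^ 3]

theorem hirotaKdV_twoSoliton_eq_zero {k₁ k₂ a : ℝ} (ha : a * (k₁ + k₂) ^ 2 = (k₁ - k₂) ^ 2)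
    (A B x t : ℝ) :
    hirotaKdV
      (fun j => expSum (twoSolitonCoeff a A B * twoSolitonWavenumber k₁ k₂ ^ j)
        (twoSolitonWavenumber k₁ k₂) (twoSolitonFrequency k₁ k₂))
      (fun j => expSum (twoSolitonCoeff a A B * twoSolitonWavenumber k₁ k₂ ^ j *
        twoSolitonFrequency k₁ k₂) (twoSolitonWavenumber k₁ k₂) (twoSolitonFrequency k₁ k₂))
      x t = 0 := by
  have hexp : exp ((k₁ + k₂) * x + (-k₁ ^ 3 - k₂ ^ 3) * t) =
      exp (k₁ * x + -k₁ ^ 3 * t) * exp (k₂ * x + -k₂ ^ 3 * t) := by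
    rw [← exp_add]; ring_nf
  simp only [hirotaKdV, expSum, Fin.sum_univ_four, twoSolitonCoeff, twoSolitonWavenumber,
    twoSolitonFrequency, Pi.mul_apply, Pi.pow_apply, Matrix.cons_val, hexp, zero_mul, add_zero,
    exp_zero]
  linear_combination (3 * k₁ * k₂ * A * B * exp (k₁ * x + -k₁ ^ 3 * t) *
    exp (k₂ * x + -k₂ ^ 3 * t)) * ha

theorem twoSoliton_eq_expSum (k₁ k₂ δ₁ δ₂ a x t : ℝ) :
    1 + exp (k₁ * (x - δ₁ - k₁ ^ 2 * t)) + exp (k₂ * (x - δ₂ - k₂ ^ 2 * t))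
        + a * exp (k₁ * (x - δ₁ - k₁ ^ 2 * t) + k₂ * (x - δ₂ - k₂ ^ 2 * t)) =
      expSum (twoSolitonCoeff a (exp (-(k₁ * δ₁))) (exp (-(k₂ * δ₂))))
        (twoSolitonWavenumber k₁ k₂) (twoSolitonFrequency k₁ k₂) x t := by
  simp only [expSum, Fin.sum_univ_four, twoSolitonCoeff, twoSolitonWavenumber,
    twoSolitonFrequency, Matrix.cons_val, zero_mul, add_zero, exp_zero, mul_assoc, ← exp_add]
  ring_nf

theorem two_soliton_solves_KdV_general (c₁ c₂ δ₁ δ₂ : ℝ) (hc₁ : 0 < c₁) (hc₂ : 0 < c₂)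
    (τ : ℝ → ℝ → ℝ) (u : ℝ → ℝ → ℝ)
    (hτ : τ = fun x t : ℝ =>
      1 + Real.exp (Real.sqrt c₁ * (x - δ₁ - c₁ * t))
        + Real.exp (Real.sqrt c₂ * (x - δ₂ - c₂ * t))
        + ((Real.sqrt c₁ - Real.sqrt c₂) / (Real.sqrt c₁ + Real.sqrt c₂)) ^ 2
          * Real.exp (Real.sqrt c₁ * (x - δ₁ - c₁ * t) + Real.sqrt c₂ * (x - δ₂ - c₂ * t)))
    (hu : u = fun x t : ℝ => 2 * iteratedDeriv 2 (fun y : ℝ => Real.log (τ y t)) x) :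
    ∀ x t : ℝ,
      deriv (fun s : ℝ => u x s) t =
        -(iteratedDeriv 3 (fun y : ℝ => u y t) x)
          - 6 * u x t * deriv (fun y : ℝ => u y t) x := by
  obtain ⟨k₁, hk₁, rfl⟩ : ∃ k, 0 < k ∧ c₁ = k ^ 2 := ⟨√c₁, sqrt_pos.2 hc₁, (sq_sqrt hc₁.le).symm⟩
  obtain ⟨k₂, hk₂, rfl⟩ : ∃ k, 0 < k ∧ c₂ = k ^ 2 := ⟨√c₂, sqrt_pos.2 hc₂, (sq_sqrt hc₂.le).symm⟩
  rw [sqrt_sq hk₁.le, sqrt_sq hk₂.le] at hτ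
  have hτ₀ (x t : ℝ) : τ x t ≠ 0 := by rw [hτ]; positivity
  have ha : ((k₁ - k₂) / (k₁ + k₂)) ^ 2 * (k₁ + k₂) ^ 2 = (k₁ - k₂) ^ 2 := by
    field_simp [(by positivity : k₁ + k₂ ≠ 0)]
  simp only [twoSoliton_eq_expSum] at hτ
  subst hτ hu
  exact isKdVSolution_of_hirotaKdV_expSum_eq_zero _ _ _ hτ₀
    (hirotaKdV_twoSoliton_eq_zero ha _ _)

/-- The 2-soliton `u(x,t) = 2 (∂²/∂x²) log τ(x,t)` with phases `θₙ(t) = δₙ + cₙ t`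
solves the KdV equation `∂u/∂t = −∂³u/∂x³ − 6 u ∂u/∂x` on all of `ℝ²`. -/
theorem two_soliton_solves_KdV (c₁ c₂ δ₁ δ₂ : ℝ) (hc₁ : 0 < c₁) (hc₂ : 0 < c₂)
    (hne : c₁ ≠ c₂) (τ : ℝ → ℝ → ℝ) (u : ℝ → ℝ → ℝ)
    (hτ : τ = fun x t : ℝ =>
      1 + Real.exp (Real.sqrt c₁ * (x - δ₁ - c₁ * t))
        + Real.exp (Real.sqrt c₂ * (x - δ₂ - c₂ * t))
        + ((Real.sqrt c₁ - Real.sqrt c₂) / (Real.sqrt c₁ + Real.sqrt c₂)) ^ 2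
          * Real.exp (Real.sqrt c₁ * (x - δ₁ - c₁ * t) + Real.sqrt c₂ * (x - δ₂ - c₂ * t)))
    (hu : u = fun x t : ℝ => 2 * iteratedDeriv 2 (fun y : ℝ => Real.log (τ y t)) x) :
    ∀ x t : ℝ,
      deriv (fun s : ℝ => u x s) t =
        -(iteratedDeriv 3 (fun y : ℝ => u y t) x)
          - 6 * u x t * deriv (fun y : ℝ => u y t) x :=
  two_soliton_solves_KdV_general c₁ c₂ δ₁ δ₂ hc₁ hc₂ τ u hτ hu
end

section
/- Let V be a real inner product space, L : V → V a linear map that is symmetric (⟨Lx, y⟩ = ⟨x, Ly⟩ for all x, y ∈ V), and D : V → V a linear map that is skew-symmetric (⟨Dx, y⟩ = −⟨x, Dy⟩ for all x, y ∈ V). Let g₁, …, g_N ∈ V satisfy L(D(L gₙ)) = 0 for each n = 1, …, N. If there exist v ∈ V and a = (a₁, …, a_N) ∈ ℝᴺ with D(L v) = Σₙ aₙ gₙ, then the N×N matrix H with entries H_{n,m} = ⟨L gₙ, gₘ⟩ satisfies H·a = 0; in particular, if a ≠ 0 then H is singular. (This is the abstract content of Lemma 3: the second generalized kernel of ∂ₓL_N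 is empty if the Hessian matrix H has no zero eigenvalue.) -/
open scoped InnerProductSpace

theorem inner_map_skew_map_eq_zero {V : Type*} [NormedAddCommGroup V] [InnerProductSpace ℝ V]
    {L D : V →ₗ[ℝ] V} (hL : L.IsSymmetric) (hD : ∀ x y : V, ⟪D x, y⟫_ℝ = -⟪x, D y⟫_ℝ)
    {x : V} (hx : L (D (L x)) = 0) (v : V) :
    ⟪L x, D (L v)⟫_ℝ = 0 := by
  rw [← neg_eq_zero, ← hD, ← hL, hx, inner_zero_left]

theorem Matrix.mulVec_of_inner {𝕜 E ι : Type*} [RCLike 𝕜] [NormedAddCommGroup E]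
    [InnerProductSpace 𝕜 E] [Fintype ι] (u w : ι → E) (a : ι → 𝕜) :
    Matrix.mulVec (Matrix.of fun n m => ⟪u n, w m⟫_𝕜) a = fun n => ⟪u n, ∑ m, a m • w m⟫_𝕜 := by
  ext n
  simp only [Matrix.mulVec, dotProduct, Matrix.of_apply, inner_sum, inner_smul_right, mul_comm]

/-- Abstract content of Lemma 3: if `L` is symmetric, `D` skew-symmetric,
`g₁, …, g_N` satisfy `L (D (L gₙ)) = 0`, and `D (L v) = Σₙ aₙ gₙ` for some `v`,
then the Hessian-type matrix `H_{n,m} = ⟨L gₙ, gₘ⟩` satisfies `H a = 0`;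
in particular `H` is singular whenever `a ≠ 0`. -/
theorem second_generalized_kernel_empty_of_nonsingular_hessian
    {V : Type*} [NormedAddCommGroup V] [InnerProductSpace ℝ V]
    (L D : V →ₗ[ℝ] V)
    (hL : ∀ x y : V, ⟪L x, y⟫_ℝ = ⟪x, L y⟫_ℝ)
    (hD : ∀ x y : V, ⟪D x, y⟫_ℝ = -⟪x, D y⟫_ℝ)
    (N : ℕ) (g : Fin N → V)
    (hg : ∀ n, L (D (L (g n))) = 0)
    (v : V) (a : Fin N → ℝ)
    (hv : D (L v) = ∑ n, a n • g n)
    (H : Matrix (Fin N) (Fin N) ℝ)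
    (hH : H = fun n m => ⟪L (g n), g m⟫_ℝ) :
    H.mulVec a = 0 ∧ (a ≠ 0 → H.det = 0) := by
  have hHa : H.mulVec a = 0 := by
    subst hH
    refine (Matrix.mulVec_of_inner (fun n => L (g n)) g a).trans ?_
    rw [← hv]
    funext n
    exact inner_map_skew_map_eq_zero hL hD (hg n) v
  exact ⟨hHa, fun ha => Matrix.exists_mulVec_eq_zero_iff.mp ⟨a, ha, hHa⟩⟩
end

section
/- Let V be a complex inner product space and let L, M : V → V be linear maps that are symmetric with respect to the inner product (⟨Lx, y⟩ = ⟨x, Ly⟩ and ⟨Mx, y⟩ = ⟨x, My⟩ for all x, y ∈ V). Assume: (i) ⟨v, L v⟩ ≥ 0 for all v in a subspace X ⊆ V, with ⟨v, L v⟩ = 0 for v ∈ X only if L v = 0; (ii) ⟨w, M w⟩ ≥ 0 for all w in a subspace X' ⊆ V, with ⟨w, M w⟩ = 0 for w ∈ X' only if M w = 0. If λ ∈ ℂ with Re(λ) > 0 and v ∈ X, w ∈ X' satisfy L v = −λ w and M w = λ v, then v = 0 and w = 0. (Abstract form of Proposition 2: the coupled problem has no eigenvalues with Re(λ) > 0.)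 -/
open scoped InnerProductSpace ComplexOrder

/-! Pairing the two equations with `v` and `w` expresses both quadratic forms through the
single number `a = ⟪v, w⟫`: `⟪v, L v⟫ = -λ a` and `⟪w, M w⟫ = λ ā`. Both being
nonnegative reals forces `a = 0` when `Re λ > 0`, so both forms vanish, hence
`L v = 0 = M w`, and the equations give `w = 0` and `v = 0`. -/

theorem Complex.eq_zero_of_neg_mul_nonneg_of_mul_conj_nonneg {lam a : ℂ} (hlam : 0 < lam.re)
    (h₁ : 0 ≤ -lam * a) (h₂ : 0 ≤ lam * (starRingEnd ℂ) a) : a = 0 := by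
  obtain ⟨h₁re, h₁im⟩ := Complex.le_def.mp h₁
  obtain ⟨h₂re, h₂im⟩ := Complex.le_def.mp h₂
  simp only [mul_re, mul_im, neg_re, neg_im, conj_re, conj_im, zero_re, zero_im]
    at h₁re h₁im h₂re h₂im
  have him : a.im = 0 :=
    (mul_eq_zero.mp (show lam.re * a.im = 0 by linarith)).resolve_left hlam.ne'
  simp only [him, mul_zero, neg_zero, sub_zero] at h₁re h₂re
  have hre : a.re = 0 :=
    (mul_eq_zero.mp (show lam.re * a.re = 0 by linarith)).resolve_left hlam.ne'
  exact Complex.ext hre him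

theorem coupled_problem_no_unstable_eigenvalues_general
    {V : Type*} [NormedAddCommGroup V] [InnerProductSpace ℂ V]
    (L M : V →ₗ[ℂ] V)
    (X X' : Submodule ℂ V)
    (hLpos : ∀ v ∈ X, 0 ≤ ⟪v, L v⟫_ℂ)
    (hLzero : ∀ v ∈ X, ⟪v, L v⟫_ℂ = 0 → L v = 0)
    (hMpos : ∀ w ∈ X', 0 ≤ ⟪w, M w⟫_ℂ)
    (hMzero : ∀ w ∈ X', ⟪w, M w⟫_ℂ = 0 → M w = 0)
    (lam : ℂ) (hlam : 0 < lam.re)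
    (v w : V) (hvX : v ∈ X) (hwX : w ∈ X')
    (hv : L v = -lam • w) (hw : M w = lam • v) :
    v = 0 ∧ w = 0 := by
  have hlam₀ : lam ≠ 0 := by rintro rfl; simp at hlam
  have hvL : ⟪v, L v⟫_ℂ = -lam * ⟪v, w⟫_ℂ := by rw [hv, inner_smul_right]
  have hwM : ⟪w, M w⟫_ℂ = lam * (starRingEnd ℂ) ⟪v, w⟫_ℂ := by
    rw [hw, inner_smul_right, inner_conj_symm]
  have hvw : ⟪v, w⟫_ℂ = 0 := Complex.eq_zero_of_neg_mul_nonneg_of_mul_conj_nonneg hlam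
    (hvL ▸ hLpos v hvX) (hwM ▸ hMpos w hwX)
  have hLv : L v = 0 := hLzero v hvX (by rw [hvL, hvw, mul_zero])
  have hMw : M w = 0 := hMzero w hwX (by rw [hwM, hvw, map_zero, mul_zero])
  constructor
  · simpa [hlam₀] using hw.symm.trans hMw
  · simpa [hlam₀] using hv.symm.trans hLv

/-- Abstract form of Proposition 2: if the quadratic forms of the symmetric maps `L`
and `M` are nonnegative on subspaces `X` and `X'` respectively and vanish there only on
the respective kernels, then the coupled problem `L v = −λ w`, `M w = λ v` has no
nontrivial solution with `Re(λ) > 0`. -/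
theorem coupled_problem_no_unstable_eigenvalues
    {V : Type*} [NormedAddCommGroup V] [InnerProductSpace ℂ V]
    (L M : V →ₗ[ℂ] V)
    (hL : ∀ x y : V, ⟪L x, y⟫_ℂ = ⟪x, L y⟫_ℂ)
    (hM : ∀ x y : V, ⟪M x, y⟫_ℂ = ⟪x, M y⟫_ℂ)
    (X X' : Submodule ℂ V)
    (hLpos : ∀ v ∈ X, 0 ≤ ⟪v, L v⟫_ℂ)
    (hLzero : ∀ v ∈ X, ⟪v, L v⟫_ℂ = 0 → L v = 0)
    (hMpos : ∀ w ∈ X', 0 ≤ ⟪w, M w⟫_ℂ)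
    (hMzero : ∀ w ∈ X', ⟪w, M w⟫_ℂ = 0 → M w = 0)
    (lam : ℂ) (hlam : 0 < lam.re)
    (v w : V) (hvX : v ∈ X) (hwX : w ∈ X')
    (hv : L v = -lam • w) (hw : M w = lam • v) :
    v = 0 ∧ w = 0 :=
  coupled_problem_no_unstable_eigenvalues_general L M X X' hLpos hLzero hMpos hMzero lam hlam v w
    hvX hwX hv hw
end

section
/- Let x₁, …, x_N be elements of a commutative ring and let l ∈ {1, …, N}. Let A be the N×N matrix whose (i,j) entry is xᵢʲ for j ≠ l and is xᵢ^{N+1} for j = l (i.e. the matrix (xᵢʲ)_{i,j=1..N} with its l-th column replaced by (xᵢ^{N+1})ᵢ). Then det A = (−1)^{N−l}·e_{N−l+1}(x₁, …, x_N)·(∏_{i=1}^N xᵢ)·∏_{1 ≤ i < j ≤ N} (xⱼ − xᵢ). (This is the identity D_l = (−1)^{N−l} D_l^{N+1} with D_l^{N+1} = σ_N σ_{N−l+1} D used in the proof of Proposition 4.) -/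
/-!
By Vieta, every `xᵢ` is a root of `∏ⱼ (X - xⱼ) = ∑ₖ (-1)^(N-k) e_{N-k}(x) Xᵏ`, so the column
`(xᵢ^N)ᵢ` is a linear combination of the Vandermonde columns `(xᵢᵏ)ᵢ`, `k < N`, with coefficients
`-(-1)^(N-k) e_{N-k}(x)`. Replacing column `l` of the Vandermonde matrix by it multiplies the
determinant by the `l`-th coefficient, and the matrix of the theorem is this one with row `i`
multiplied by `xᵢ`.
-/

open Finset

open Polynomial in
theorem Multiset.eval_prod_X_sub_C_eq_sum_esymm {R : Type*} [CommRing R] (s : Multiset R) (a : R) :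
    (s.map fun t => X - C t).prod.eval a =
      ∑ k ∈ Finset.range (card s + 1), (-1) ^ (card s - k) * s.esymm (card s - k) * a ^ k := by
  have hdeg : (s.map fun t => X - C t).prod.natDegree < card s + 1 := by
    refine Nat.lt_succ_of_le ((natDegree_multiset_prod_le _).trans ?_)
    simpa [Multiset.map_map] using
      Multiset.sum_map_le_sum_map (s := s) _ (fun _ => 1) fun t _ => natDegree_X_sub_C_le t
  rw [eval_eq_sum_range' hdeg]
  refine Finset.sum_congr rfl fun k hk => ?_
  rw [prod_X_sub_C_coeff s (Nat.lt_succ_iff.mp (Finset.mem_range.mp hk))]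

theorem Multiset.pow_card_eq_sum_esymm_mul_pow {R : Type*} [CommRing R] {s : Multiset R} {a : R}
    (ha : a ∈ s) :
    a ^ card s = ∑ k ∈ Finset.range (card s),
      -((-1) ^ (card s - k) * s.esymm (card s - k)) * a ^ k := by
  have hroot : (s.map fun t => Polynomial.X - Polynomial.C t).prod.eval a = 0 := by
    rw [Polynomial.eval_multiset_prod]
    exact Multiset.prod_eq_zero (by simpa using ⟨a, ha, sub_self a⟩)
  have hesymm_zero : s.esymm 0 = 1 := by simp [Multiset.esymm]
  rw [eval_prod_X_sub_C_eq_sum_esymm, Finset.sum_range_succ, Nat.sub_self, pow_zero, hesymm_zero,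
    one_mul, one_mul] at hroot
  simp only [neg_mul, Finset.sum_neg_distrib]
  linear_combination hroot

theorem Matrix.det_updateCol_vandermonde_pow_card {R : Type*} [CommRing R] {N : ℕ}
    (x : Fin N → R) (l : Fin N) :
    ((vandermonde x).updateCol l fun i => x i ^ N).det =
      -((-1) ^ (N - l) * (univ.val.map x).esymm (N - l)) * (vandermonde x).det := by
  have hcol : (fun i => x i ^ N) = fun i => ∑ k : Fin N,
      -((-1) ^ (N - k) * (univ.val.map x).esymm (N - k)) • vandermonde x i k := by
    funext i
    have hroot := Multiset.pow_card_eq_sum_esymm_mul_pow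
      (Multiset.mem_map_of_mem x (mem_val.mpr (mem_univ i)))
    rw [Multiset.card_map, card_val, card_univ, Fintype.card_fin] at hroot
    rw [hroot, ← Fin.sum_univ_eq_sum_range]
    rfl
  rw [hcol, det_updateCol_sum, smul_eq_mul]

/-- The determinant identity `D_l = (−1)^{N−l} σ_N σ_{N−l+1} D` from the proof of
Proposition 4: if the `l`-th column of the matrix `(xᵢʲ)_{i,j=1..N}` is replaced by
`(xᵢ^{N+1})ᵢ`, the determinant equals
`(−1)^{N−l} e_{N−l+1}(x) (∏ xᵢ) ∏_{i<j} (xⱼ − xᵢ)`.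
Here `l : Fin N` denotes the `(l+1)`-th column in 1-based indexing, hence the exponents
`N − 1 − l` and `N − l` below, and the elementary symmetric polynomial `e_k` is written
as a sum over `k`-element subsets. -/
theorem replaced_column_vandermonde_determinant {R : Type*} [CommRing R]
    (N : ℕ) (x : Fin N → R) (l : Fin N) :
    (Matrix.of fun i j : Fin N =>
        if j = l then x i ^ (N + 1) else x i ^ ((j : ℕ) + 1)).det =
      (-1 : R) ^ (N - 1 - (l : ℕ)) *
        (∑ t ∈ univ.powersetCard (N - (l : ℕ)), ∏ i ∈ t, x i) *
        ((∏ i, x i) * ∏ i, ∏ j ∈ Ioi i, (x j - x i)) := by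
  have hA : (Matrix.of fun i j : Fin N =>
      if j = l then x i ^ (N + 1) else x i ^ ((j : ℕ) + 1)) =
      Matrix.of fun i j => x i * ((Matrix.vandermonde x).updateCol l fun i => x i ^ N) i j := by
    ext i j
    by_cases hj : j = l <;> simp [hj, Matrix.updateCol_apply, Matrix.vandermonde_apply, pow_succ']
  have hsign : (-1 : R) ^ (N - l) = -(-1) ^ (N - 1 - l) := by
    rw [show N - l = N - 1 - l + 1 by omega, pow_succ, mul_neg_one]
  rw [hA, Matrix.det_mul_column, Matrix.det_updateCol_vandermonde_pow_card,
    Matrix.det_vandermonde, esymm_map_val, hsign]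
  ring
end

section
/- Let N ≥ 1, let κ₁ > κ₂ > ⋯ > κ_N > 0 be real numbers, let ΔR₁, …, ΔR_{N+1} ≥ 0, and let Δκ ∈ ℝᴺ satisfy the constraint system Σ_{j=1}^N κⱼ^{2n}·Δκⱼ = (−1)ⁿ·ΔRₙ for n = 1, …, N. Then (−1)^N·Σ_{j=1}^N κⱼ^{2N+2}·Δκⱼ + ΔR_{N+1} = Σ_{n=1}^N e_{N−n+1}(κ₁², …, κ_N²)·ΔRₙ + ΔR_{N+1}; in particular this quantity is ≥ 0, and it is strictly positive if ΔRₙ > 0 for at least one n ∈ {1, …, N+1}. (This is the core computation of Proposition 4 showing ΔH_{N+1}(U_N) > 0, i.e. convexity of the Lyapunov functional at the N-soliton.) -/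
/-!
Each `xⱼ = κⱼ²` is a root of `∏ᵢ (X - xᵢ) = Σₘ (-1)^(N-m) e_{N-m} Xᵐ`, so `xⱼ^(N+1)` is a
combination of `xⱼ, …, xⱼ^N` with coefficients `±e_{N-n}`. Pairing with `Δκ` turns the left-hand
side into a combination of the constrained sums `Σⱼ xⱼ^(n+1) Δκⱼ = (-1)^(n+1) ΔR_{n+1}`, in which
all the signs cancel. Positivity follows because `e_k(κ²) > 0` for `k ≤ N`.
-/

open Finset Polynomial

section Vieta

variable {R : Type*} [CommRing R]

theorem Multiset.sum_range_esymm_mul_pow_eq_zero_of_mem (s : Multiset R) {x : R} (hx : x ∈ s) :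
    ∑ m ∈ Finset.range (Multiset.card s + 1),
      (-1) ^ (Multiset.card s - m) * s.esymm (Multiset.card s - m) * x ^ m = 0 := by
  nontriviality R
  have hroot : ((s.map fun t => X - C t).prod).eval x = 0 := by
    rw [eval_multiset_prod]
    exact Multiset.prod_eq_zero (Multiset.mem_map.2 ⟨_, Multiset.mem_map.2 ⟨x, hx, rfl⟩, by simp⟩)
  rw [eval_eq_sum_range, natDegree_multiset_prod_X_sub_C_eq_card] at hroot
  rw [← hroot]
  exact sum_congr rfl fun m hm => by
    rw [Multiset.prod_X_sub_C_coeff s (Nat.lt_succ_iff.1 (mem_range.1 hm))]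

theorem Multiset.pow_card_eq_sum_esymm_of_mem (s : Multiset R) {x : R} (hx : x ∈ s) :
    x ^ Multiset.card s = ∑ m ∈ Finset.range (Multiset.card s),
      (-1) ^ (Multiset.card s + m + 1) * s.esymm (Multiset.card s - m) * x ^ m := by
  have h := s.sum_range_esymm_mul_pow_eq_zero_of_mem hx
  have he0 : s.esymm 0 = 1 := by simp [Multiset.esymm]
  rw [sum_range_succ, Nat.sub_self, pow_zero, he0, one_mul, one_mul] at h
  rw [eq_neg_of_add_eq_zero_right h, ← sum_neg_distrib]
  refine sum_congr rfl fun m hm => ?_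
  have hsign : Multiset.card s + m + 1 = (Multiset.card s - m) + 1 + 2 * m := by
    have := mem_range.1 hm; omega
  rw [hsign, pow_add, pow_add, pow_mul]
  ring

theorem Finset.pow_card_eq_sum_esymm {ι : Type*} [Fintype ι] (f : ι → R) (j : ι) :
    f j ^ Fintype.card ι = ∑ m ∈ range (Fintype.card ι),
      (-1) ^ (Fintype.card ι + m + 1) *
        (∑ t ∈ univ.powersetCard (Fintype.card ι - m), ∏ i ∈ t, f i) * f j ^ m := by
  have h := (univ.val.map f).pow_card_eq_sum_esymm_of_mem
    (Multiset.mem_map_of_mem f (mem_univ_val j))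
  simpa only [Multiset.card_map, ← Finset.card_def, card_univ, esymm_map_val] using h

end Vieta

theorem neg_one_pow_mul_sum_pow_succ_mul_eq_sum_esymm_mul {R : Type*} [CommRing R] {N : ℕ}
    (x w r : Fin N → R)
    (h : ∀ n : Fin N, ∑ j, x j ^ ((n : ℕ) + 1) * w j = (-1) ^ ((n : ℕ) + 1) * r n) :
    (-1) ^ N * ∑ j, x j ^ (N + 1) * w j =
      ∑ n : Fin N, (∑ t ∈ univ.powersetCard (N - (n : ℕ)), ∏ i ∈ t, x i) * r n := by
  set e : Fin N → R := fun n => ∑ t ∈ univ.powersetCard (N - (n : ℕ)), ∏ i ∈ t, x i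
  have hpow : ∀ j, x j ^ (N + 1) = ∑ n : Fin N, (-1) ^ (N + n + 1) * e n * x j ^ ((n : ℕ) + 1) := by
    intro j
    have h := pow_card_eq_sum_esymm x j
    rw [Fintype.card_fin] at h
    rw [pow_succ, h, sum_mul, ← Fin.sum_univ_eq_sum_range]
    exact sum_congr rfl fun n _ => by ring
  calc (-1) ^ N * ∑ j, x j ^ (N + 1) * w j
      = ∑ n : Fin N, (-1) ^ N * (-1) ^ (N + n + 1) * e n * ∑ j, x j ^ ((n : ℕ) + 1) * w j := by
        simp_rw [hpow, sum_mul, mul_sum]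
        rw [sum_comm]
        exact sum_congr rfl fun n _ => sum_congr rfl fun j _ => by ring
    _ = ∑ n : Fin N, ((-1) ^ (N + (n : ℕ) + 1)) ^ 2 * e n * r n := by
        refine sum_congr rfl fun n _ => ?_
        rw [h n]
        ring
    _ = ∑ n : Fin N, e n * r n := by simp_rw [← pow_mul, pow_mul', neg_one_sq, one_pow, one_mul]

theorem Finset.sum_powersetCard_prod_pos {ι R : Type*} [CommSemiring R] [PartialOrder R]
    [IsStrictOrderedRing R] {s : Finset ι} {f : ι → R} (hf : ∀ i ∈ s, 0 < f i) {k : ℕ}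
    (hk : k ≤ #s) : 0 < ∑ t ∈ s.powersetCard k, ∏ i ∈ t, f i :=
  sum_pos (fun _ ht => prod_pos fun i hi => hf i ((mem_powersetCard.1 ht).1 hi))
    (powersetCard_nonempty.2 hk)

/-- Indices are zero-based: `n : Fin N` is the paper's `n + 1`, and `ΔR (Fin.last N)` is
`ΔR_{N+1}`. -/
theorem convexity_of_lyapunov_functional_general (N : ℕ)
    (κ : Fin N → ℝ) (hκpos : ∀ j, 0 < κ j)
    (ΔR : Fin (N + 1) → ℝ) (hΔR : ∀ i, 0 ≤ ΔR i)
    (Δκ : Fin N → ℝ)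
    (hconstraint : ∀ n : Fin N,
      ∑ j, κ j ^ (2 * ((n : ℕ) + 1)) * Δκ j = (-1 : ℝ) ^ ((n : ℕ) + 1) * ΔR n.castSucc) :
    ((-1 : ℝ) ^ N * ∑ j, κ j ^ (2 * N + 2) * Δκ j + ΔR (Fin.last N) =
        (∑ n : Fin N,
          (∑ t ∈ univ.powersetCard (N - (n : ℕ)), ∏ i ∈ t, κ i ^ 2) * ΔR n.castSucc)
          + ΔR (Fin.last N)) ∧
      0 ≤ (-1 : ℝ) ^ N * ∑ j, κ j ^ (2 * N + 2) * Δκ j + ΔR (Fin.last N) ∧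
      ((∃ i, 0 < ΔR i) →
        0 < (-1 : ℝ) ^ N * ∑ j, κ j ^ (2 * N + 2) * Δκ j + ΔR (Fin.last N)) := by
  have hid := neg_one_pow_mul_sum_pow_succ_mul_eq_sum_esymm_mul (fun j => κ j ^ 2) Δκ
    (fun n => ΔR n.castSucc) (by simpa only [pow_mul] using hconstraint)
  simp only [← pow_mul, mul_add_one] at hid
  rw [hid]
  have hE : ∀ n : Fin N, 0 < ∑ t ∈ univ.powersetCard (N - (n : ℕ)), ∏ i ∈ t, κ i ^ 2 :=
    fun n => sum_powersetCard_prod_pos (fun i _ => pow_pos (hκpos i) 2) (by simp)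
  have hterm : ∀ n ∈ (univ : Finset (Fin N)),
      0 ≤ (∑ t ∈ univ.powersetCard (N - (n : ℕ)), ∏ i ∈ t, κ i ^ 2) * ΔR n.castSucc :=
    fun n _ => mul_nonneg (hE n).le (hΔR _)
  refine ⟨rfl, add_nonneg (sum_nonneg hterm) (hΔR _), ?_⟩
  rintro ⟨i, hi⟩
  obtain ⟨n, rfl⟩ | rfl := Fin.eq_castSucc_or_eq_last i
  · exact add_pos_of_pos_of_nonneg (sum_pos' hterm ⟨n, mem_univ n, mul_pos (hE n) hi⟩) (hΔR _)
  · exact add_pos_of_nonneg_of_pos (sum_nonneg hterm) hi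

/-- Core computation of Proposition 4 (convexity of the Lyapunov functional at the
N-soliton). Let `κ₁ > … > κ_N > 0`, `ΔR₁, …, ΔR_{N+1} ≥ 0` and suppose
`Σⱼ κⱼ^{2n} Δκⱼ = (−1)ⁿ ΔRₙ` for `n = 1, …, N`. Then
`(−1)^N Σⱼ κⱼ^{2N+2} Δκⱼ + ΔR_{N+1} = Σₙ e_{N−n+1}(κ²) ΔRₙ + ΔR_{N+1}`,
this quantity is nonnegative, and it is positive as soon as some `ΔRₙ > 0`.
Indices are zero-based: `n : Fin N` stands for the 1-based index `n+1`, and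
`ΔR : Fin (N+1) → ℝ` with `ΔR i` standing for `ΔR_{i+1}`; the elementary symmetric
polynomial `e_k` is written as a sum over `k`-element subsets. -/
theorem convexity_of_lyapunov_functional (N : ℕ) (hN : 1 ≤ N)
    (κ : Fin N → ℝ) (hκpos : ∀ j, 0 < κ j) (hκanti : StrictAnti κ)
    (ΔR : Fin (N + 1) → ℝ) (hΔR : ∀ i, 0 ≤ ΔR i)
    (Δκ : Fin N → ℝ)
    (hconstraint : ∀ n : Fin N,
      ∑ j, κ j ^ (2 * ((n : ℕ) + 1)) * Δκ j = (-1 : ℝ) ^ ((n : ℕ) + 1) * ΔR n.castSucc) :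
    ((-1 : ℝ) ^ N * ∑ j, κ j ^ (2 * N + 2) * Δκ j + ΔR (Fin.last N) =
        (∑ n : Fin N,
          (∑ t ∈ univ.powersetCard (N - (n : ℕ)), ∏ i ∈ t, κ i ^ 2) * ΔR n.castSucc)
          + ΔR (Fin.last N)) ∧
      0 ≤ (-1 : ℝ) ^ N * ∑ j, κ j ^ (2 * N + 2) * Δκ j + ΔR (Fin.last N) ∧
      ((∃ i, 0 < ΔR i) →
        0 < (-1 : ℝ) ^ N * ∑ j, κ j ^ (2 * N + 2) * Δκ j + ΔR (Fin.last N)) :=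
  convexity_of_lyapunov_functional_general N κ hκpos ΔR hΔR Δκ hconstraint
end
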